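/- arXiv:1111.1819 — 10 statements merged into one kernel-verified Lean document; each statement's English description precedes it below -/
import Mathlib

section
/- If M = (M_k) is a log-convex sequence of positive reals with M_0 = 1, then for every j ≥ 1 and all positive integers α_1, ..., α_j with α_1 + ... + α_j = k, one has M_j * M_{α_1} * ... * M_{α_j} ≤ M_1^j * M_k. -/
open Finset

/-- If `M` is log-convex positive with `M 0 = 1`, then for `j ≥ 1` and positive
integers `α 0, …, α (j-1)` summing to `k`, we have
`M j * ∏ i, M (α i) ≤ (M 1) ^ j * M k`. -/
theorem logConvex_faa_di_bruno_estimate (M : ℕ → ℝ)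
    (hpos : ∀ k, 0 < M k) (h0 : M 0 = 1)
    (hlc : ∀ k, (M (k + 1)) ^ 2 ≤ M k * M (k + 2)) :
    ∀ (j k : ℕ), 1 ≤ j → ∀ α : Fin j → ℕ, (∀ i, 0 < α i) →
      (∑ i, α i) = k →
      M j * ∏ i, M (α i) ≤ (M 1) ^ j * M k := by
  -- ratios are monotone (cross-multiplied form)
  have hr : ∀ p q : ℕ, p ≤ q → M (p + 1) * M q ≤ M p * M (q + 1) := by
    intro p q hpq
    have mono : Monotone (fun n => M (n + 1) / M n) := by
      apply monotone_nat_of_le_succ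
      intro n
      rw [div_le_div_iff₀ (hpos n) (hpos (n + 1))]
      nlinarith [hlc n]
    have h := mono hpq
    simp only at h
    rw [div_le_div_iff₀ (hpos p) (hpos q)] at h
    linarith
  -- gap monotonicity
  have gap : ∀ d n m : ℕ, n ≤ m → M (n + d) * M m ≤ M n * M (m + d) := by
    intro d
    induction d with
    | zero => intro n m _; simp [mul_comm]
    | succ d ih =>
      intro n m hnm
      have h1 := hr (n + d) (m + d) (by omega)
      have h2 := ih n m hnm
      have key : (M (n + d + 1) * M m) * M (m + d) ≤ (M n * M (m + d + 1)) * M (m + d) := by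
        nlinarith [mul_le_mul_of_nonneg_right h1 (hpos m).le,
          mul_le_mul_of_nonneg_right h2 (hpos (m + d + 1)).le]
      exact le_of_mul_le_mul_right key (hpos (m + d))
  intro j
  induction j with
  | zero => intro k h; omega
  | succ j ih =>
    intro k _ α hα hsum
    rcases Nat.eq_zero_or_pos j with hj0 | hj1
    · subst hj0
      rw [Fin.sum_univ_one] at hsum
      rw [Fin.prod_univ_one, hsum, pow_one]
    · obtain ⟨a', haa⟩ : ∃ a', α (Fin.last j) = a' + 1 :=
        ⟨α (Fin.last j) - 1, by have := hα (Fin.last j); omega⟩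
      set β : Fin j → ℕ := fun i => α i.castSucc with hβ
      set s := ∑ i, β i with hs
      have hks : k = s + (a' + 1) := by rw [← hsum, Fin.sum_univ_castSucc, haa]
      have IH := ih s hj1 β (fun i => hα _) rfl
      have hjs : j ≤ s := by
        calc (j : ℕ) = ∑ _i : Fin j, 1 := by simp
        _ ≤ ∑ i, β i := Finset.sum_le_sum (fun i _ => hα i.castSucc)
      -- key inequality: M (j+1) * M a * M s ≤ M 1 * M j * M (s + a)
      have hB : M (a' + 1) * M s ≤ M 1 * M (s + a') := by
        have := gap a' 1 s (by omega)
        calc M (a' + 1) * M s = M (1 + a') * M s := by rw [Nat.add_comm]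
        _ ≤ M 1 * M (s + a') := this
      have hC : M (j + 1) * M (s + a') ≤ M j * M (s + a' + 1) := hr j (s + a') (by omega)
      have key : M (j + 1) * M (a' + 1) * M s ≤ M 1 * M j * M (s + (a' + 1)) := by
        have h1 : M (j + 1) * (M (a' + 1) * M s) ≤ M (j + 1) * (M 1 * M (s + a')) :=
          mul_le_mul_of_nonneg_left hB (hpos (j + 1)).le
        have h2 : M 1 * (M (j + 1) * M (s + a')) ≤ M 1 * (M j * M (s + a' + 1)) :=
          mul_le_mul_of_nonneg_left hC (hpos 1).le
        show M (j + 1) * M (a' + 1) * M s ≤ M 1 * M j * M (s + a' + 1)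
        nlinarith
      rw [Fin.prod_univ_castSucc, hks, haa]
      set P := ∏ i : Fin j, M (β i) with hP
      have hPpos : 0 < P := Finset.prod_pos (fun i _ => hpos _)
      have t1 : (M (j + 1) * (P * M (a' + 1))) * M j ≤
          ((M 1) ^ (j + 1) * M (s + (a' + 1))) * M j := by
        calc (M (j + 1) * (P * M (a' + 1))) * M j
            = (M j * P) * (M (j + 1) * M (a' + 1)) := by ring
          _ ≤ ((M 1) ^ j * M s) * (M (j + 1) * M (a' + 1)) :=
              mul_le_mul_of_nonneg_right IH (mul_pos (hpos _) (hpos _)).le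
          _ = (M 1) ^ j * (M (j + 1) * M (a' + 1) * M s) := by ring
          _ ≤ (M 1) ^ j * (M 1 * M j * M (s + (a' + 1))) :=
              mul_le_mul_of_nonneg_left key (pow_pos (hpos 1) j).le
          _ = ((M 1) ^ (j + 1) * M (s + (a' + 1))) * M j := by ring
      exact le_of_mul_le_mul_right t1 (hpos j)
end

section
/- For positive sequences M^1 and M^2, the Roumieu sequence space F^{{M^1}} = ∪_{ρ>0} F^{M^1}_ρ is contained in F^{{M^2}} = ∪_{ρ>0} F^{M^2}_ρ if and only if sup_k (M^1_k / M^2_k)^{1/k} < ∞. -/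
/-- The sequence space `F^M_ρ`. -/
def seqSpace (M : ℕ → ℝ) (ρ : ℝ) : Set (ℕ → ℝ) :=
  {f | ∃ C > (0 : ℝ), ∀ k : ℕ, |f k| ≤ C * ρ ^ k * (Nat.factorial k) * M k}

/-- The Roumieu sequence space `F^{{M}} = ⋃_{ρ>0} F^M_ρ`. -/
def seqSpaceRoumieu (M : ℕ → ℝ) : Set (ℕ → ℝ) :=
  ⋃ ρ > (0 : ℝ), seqSpace M ρ

/-- `F^{{M¹}} ⊆ F^{{M²}}` iff `sup_k (M¹_k / M²_k)^{1/k} < ∞`. -/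
theorem seqSpaceRoumieu_incl_iff (M₁ M₂ : ℕ → ℝ)
    (hpos₁ : ∀ k, 0 < M₁ k) (hpos₂ : ∀ k, 0 < M₂ k) :
    seqSpaceRoumieu M₁ ⊆ seqSpaceRoumieu M₂ ↔
      ∃ σ : ℝ, ∀ k : ℕ, 1 ≤ k → (M₁ k / M₂ k) ^ ((1 : ℝ) / k) ≤ σ := by
  constructor
  · intro hsub
    -- the test sequence f k = k! * M₁ k
    set f : ℕ → ℝ := fun k => (Nat.factorial k : ℝ) * M₁ k with hf
    have hfmem : f ∈ seqSpaceRoumieu M₁ := by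
      simp only [seqSpaceRoumieu, Set.mem_iUnion]
      refine ⟨1, one_pos, 1, one_pos, fun k => ?_⟩
      have h1 : (0:ℝ) ≤ (Nat.factorial k : ℝ) * M₁ k :=
        mul_nonneg (Nat.cast_nonneg _) (hpos₁ k).le
      rw [abs_of_nonneg h1]
      simp
    obtain ⟨ρ, hρ, C, hC, hb⟩ := by
      have := hsub hfmem
      simpa only [seqSpaceRoumieu, Set.mem_iUnion, seqSpace, Set.mem_setOf_eq] using this
    refine ⟨max C 1 * ρ, fun k hk => ?_⟩
    have hk0 : (0:ℝ) < (k:ℝ) := by exact_mod_cast hk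
    have hbk := hb k
    have hfac : (0:ℝ) < (Nat.factorial k : ℝ) := by exact_mod_cast k.factorial_pos
    have h1 : M₁ k ≤ C * ρ ^ k * M₂ k := by
      have : (Nat.factorial k : ℝ) * M₁ k ≤ C * ρ ^ k * (Nat.factorial k) * M₂ k := by
        have := hbk
        rw [hf] at this
        rwa [abs_of_nonneg (mul_nonneg hfac.le (hpos₁ k).le)] at this
      nlinarith [hfac, hpos₁ k, hpos₂ k]
    have hdiv : M₁ k / M₂ k ≤ C * ρ ^ k := by
      rw [div_le_iff₀ (hpos₂ k)] at *
      nlinarith [hpos₂ k]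
    have hrpow : (M₁ k / M₂ k) ^ ((1:ℝ)/k) ≤ (C * ρ ^ k) ^ ((1:ℝ)/k) :=
      Real.rpow_le_rpow (div_nonneg (hpos₁ k).le (hpos₂ k).le) hdiv
        (by positivity)
    calc (M₁ k / M₂ k) ^ ((1:ℝ)/k) ≤ (C * ρ ^ k) ^ ((1:ℝ)/k) := hrpow
      _ = C ^ ((1:ℝ)/k) * (ρ ^ k) ^ ((1:ℝ)/k) :=
          Real.mul_rpow hC.le (by positivity)
      _ = C ^ ((1:ℝ)/k) * ρ := by
          rw [← Real.rpow_natCast ρ k, ← Real.rpow_mul hρ.le]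
          rw [mul_one_div, div_self (ne_of_gt hk0), Real.rpow_one]
      _ ≤ max C 1 * ρ := by
          apply mul_le_mul_of_nonneg_right _ hρ.le
          rcases le_or_gt 1 C with h | h
          · calc C ^ ((1:ℝ)/k) ≤ C ^ (1:ℝ) :=
                  Real.rpow_le_rpow_of_exponent_le h (by
                    rw [div_le_one hk0]; exact_mod_cast hk)
              _ = C := Real.rpow_one C
              _ ≤ max C 1 := le_max_left _ _
          · calc C ^ ((1:ℝ)/k) ≤ 1 :=
                  Real.rpow_le_one hC.le h.le (by positivity)
              _ ≤ max C 1 := le_max_right _ _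
  · rintro ⟨σ, hσ⟩ f hfmem
    obtain ⟨ρ, hρ, C, hC, hb⟩ := by
      simpa only [seqSpaceRoumieu, Set.mem_iUnion, seqSpace, Set.mem_setOf_eq] using hfmem
    set σ' : ℝ := max σ 1 with hσ'
    have hσ'1 : (1:ℝ) ≤ σ' := le_max_right _ _
    have hσ'0 : (0:ℝ) < σ' := lt_of_lt_of_le one_pos hσ'1
    have hM : ∀ k : ℕ, 1 ≤ k → M₁ k ≤ σ' ^ k * M₂ k := by
      intro k hk
      have hk0 : ((k:ℝ)) ≠ 0 := Nat.cast_ne_zero.mpr (Nat.one_le_iff_ne_zero.mp hk)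
      have h1 : (M₁ k / M₂ k) ^ ((1:ℝ)/k) ≤ σ' := le_trans (hσ k hk) (le_max_left _ _)
      have h2 : M₁ k / M₂ k ≤ σ' ^ ((k:ℕ):ℝ) := by
        have := Real.rpow_le_rpow (Real.rpow_nonneg
          (div_nonneg (hpos₁ k).le (hpos₂ k).le) _) h1 (Nat.cast_nonneg k)
        rwa [← Real.rpow_mul (div_nonneg (hpos₁ k).le (hpos₂ k).le),
          one_div_mul_cancel hk0, Real.rpow_one] at this
      rw [Real.rpow_natCast] at h2
      rw [div_le_iff₀ (hpos₂ k)] at h2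
      linarith
    simp only [seqSpaceRoumieu, Set.mem_iUnion]
    refine ⟨ρ * σ', by positivity, C * max 1 (M₁ 0 / M₂ 0), by positivity, fun k => ?_⟩
    rcases Nat.eq_zero_or_pos k with rfl | hk
    · calc |f 0| ≤ C * ρ ^ 0 * (Nat.factorial 0) * M₁ 0 := hb 0
        _ = C * (M₁ 0 / M₂ 0) * M₂ 0 := by
            rw [mul_assoc C (M₁ 0 / M₂ 0), div_mul_cancel₀ (M₁ 0) (hpos₂ 0).ne']
            simp
        _ ≤ C * max 1 (M₁ 0 / M₂ 0) * M₂ 0 := by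
            apply mul_le_mul_of_nonneg_right _ (hpos₂ 0).le
            exact mul_le_mul_of_nonneg_left (le_max_right _ _) hC.le
        _ = C * max 1 (M₁ 0 / M₂ 0) * (ρ * σ') ^ 0 * (Nat.factorial 0) * M₂ 0 := by
            simp
    · have hfac : (0:ℝ) < (Nat.factorial k : ℝ) := by exact_mod_cast k.factorial_pos
      calc |f k| ≤ C * ρ ^ k * (Nat.factorial k) * M₁ k := hb k
        _ ≤ C * ρ ^ k * (Nat.factorial k) * (σ' ^ k * M₂ k) := by
            apply mul_le_mul_of_nonneg_left (hM k hk)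
            positivity
        _ = C * (ρ * σ') ^ k * (Nat.factorial k) * M₂ k := by
            rw [mul_pow]; ring
        _ ≤ C * max 1 (M₁ 0 / M₂ 0) * (ρ * σ') ^ k * (Nat.factorial k) * M₂ k := by
            have h1 : C ≤ C * max 1 (M₁ 0 / M₂ 0) :=
              le_mul_of_one_le_right hC.le (le_max_left _ _)
            have : (0:ℝ) ≤ (ρ * σ') ^ k * (Nat.factorial k) * M₂ k :=
              mul_nonneg (mul_nonneg (pow_nonneg (mul_nonneg hρ.le hσ'0.le) k) hfac.le)
                (hpos₂ k).le
            nlinarith [this, h1]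
end

section
/- For positive sequences M^1 and M^2, the Roumieu space F^{{M^1}} is contained in the Beurling space F^{(M^2)} = ∩_{ρ>0} F^{M^2}_ρ if and only if lim_{k→∞} (M^1_k / M^2_k)^{1/k} = 0 (i.e., M^1 ◁ M^2). -/
/-- The Beurling sequence space `F^{(M)} = ⋂_{ρ>0} F^M_ρ`. -/
def seqSpaceBeurling (M : ℕ → ℝ) : Set (ℕ → ℝ) :=
  ⋂ ρ > (0 : ℝ), seqSpace M ρ

/-- `M¹ ◁ M²`: for all `ρ > 0` there is `C > 0` with `M¹_k ≤ C ρ^k M²_k`. -/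
def seqLhd (M₁ M₂ : ℕ → ℝ) : Prop :=
  ∀ ρ > (0 : ℝ), ∃ C > (0 : ℝ), ∀ k : ℕ, M₁ k ≤ C * ρ ^ k * M₂ k

open Nat

section

variable {M₁ M₂ : ℕ → ℝ}

theorem seqSpace_subset_of_le_mul_pow {ρ σ C : ℝ} (hρ : 0 ≤ ρ) (hC : 0 < C)
    (hM : ∀ k, M₁ k ≤ C * σ ^ k * M₂ k) : seqSpace M₁ ρ ⊆ seqSpace M₂ (ρ * σ) := by
  rintro f ⟨C₀, hC₀, hf⟩
  refine ⟨C₀ * C, mul_pos hC₀ hC, fun k => ?_⟩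
  calc |f k| ≤ C₀ * ρ ^ k * k ! * M₁ k := hf k
    _ ≤ C₀ * ρ ^ k * k ! * (C * σ ^ k * M₂ k) := by gcongr; exact hM k
    _ = C₀ * C * (ρ * σ) ^ k * k ! * M₂ k := by ring

theorem factorial_mul_mem_seqSpace_iff (hM₁ : ∀ k, 0 ≤ M₁ k) {ρ : ℝ} :
    (fun k => (k ! : ℝ) * M₁ k) ∈ seqSpace M₂ ρ ↔ ∃ C > 0, ∀ k, M₁ k ≤ C * ρ ^ k * M₂ k := by
  refine exists_congr fun C => and_congr_right fun _ => forall_congr' fun k => ?_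
  rw [abs_of_nonneg (mul_nonneg (cast_nonneg _) (hM₁ k)),
    show C * ρ ^ k * k ! * M₂ k = k ! * (C * ρ ^ k * M₂ k) by ring]
  exact mul_le_mul_iff_right₀ (cast_pos.2 (factorial_pos k))

theorem factorial_mul_mem_seqSpaceRoumieu (hM₁ : ∀ k, 0 ≤ M₁ k) :
    (fun k => (k ! : ℝ) * M₁ k) ∈ seqSpaceRoumieu M₁ := by
  simp only [seqSpaceRoumieu, Set.mem_iUnion]
  exact ⟨1, one_pos, (factorial_mul_mem_seqSpace_iff hM₁).2 ⟨1, one_pos, fun k => by simp⟩⟩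

theorem factorial_mul_mem_seqSpaceBeurling_iff (hM₁ : ∀ k, 0 ≤ M₁ k) :
    (fun k => (k ! : ℝ) * M₁ k) ∈ seqSpaceBeurling M₂ ↔ seqLhd M₁ M₂ := by
  simp only [seqSpaceBeurling, Set.mem_iInter, factorial_mul_mem_seqSpace_iff hM₁, seqLhd]

theorem seqSpaceRoumieu_subset_seqSpaceBeurling_of_seqLhd (h : seqLhd M₁ M₂) :
    seqSpaceRoumieu M₁ ⊆ seqSpaceBeurling M₂ := by
  intro f hf
  simp only [seqSpaceRoumieu, Set.mem_iUnion] at hf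
  obtain ⟨ρ₀, hρ₀, hf⟩ := hf
  simp only [seqSpaceBeurling, Set.mem_iInter]
  intro ρ hρ
  obtain ⟨C, hC, hM⟩ := h (ρ / ρ₀) (div_pos hρ hρ₀)
  have hsub := seqSpace_subset_of_le_mul_pow hρ₀.le hC hM
  rw [mul_div_cancel₀ ρ hρ₀.ne'] at hsub
  exact hsub hf

end

theorem seqSpaceRoumieu_subset_Beurling_iff_general (M₁ M₂ : ℕ → ℝ)
    (hpos₁ : ∀ k, 0 < M₁ k) :
    seqSpaceRoumieu M₁ ⊆ seqSpaceBeurling M₂ ↔ seqLhd M₁ M₂ := by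
  have hM₁ : ∀ k, 0 ≤ M₁ k := fun k => (hpos₁ k).le
  refine ⟨fun h => ?_, seqSpaceRoumieu_subset_seqSpaceBeurling_of_seqLhd⟩
  exact (factorial_mul_mem_seqSpaceBeurling_iff hM₁).1 (h (factorial_mul_mem_seqSpaceRoumieu hM₁))

/-- `F^{{M¹}} ⊆ F^{(M²)}` iff `M¹ ◁ M²`. -/
theorem seqSpaceRoumieu_subset_Beurling_iff (M₁ M₂ : ℕ → ℝ)
    (hpos₁ : ∀ k, 0 < M₁ k) (hpos₂ : ∀ k, 0 < M₂ k) :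
    seqSpaceRoumieu M₁ ⊆ seqSpaceBeurling M₂ ↔ seqLhd M₁ M₂ :=
  seqSpaceRoumieu_subset_Beurling_iff_general M₁ M₂ hpos₁
end

section
/- Let M = (M_k) and L = (L_k) be positive sequences, and define (M∘L)_k := max{ M_j L_{α_1} ⋯ L_{α_j} : j ≥ 1, α_i ∈ ℕ_{>0}, α_1 + ⋯ + α_j = k }. If the coefficients of formal power series f and g (with g having zero constant term) satisfy |f_j| ≤ C_f ρ_f^j j! M_j and |g_α| ≤ C_g ρ_g^α α! L_α for all j, α ≥ 1, then the formal composite h = f∘g satisfies |h_k| ≤ D τ^k k! (M∘L)_k for all k ≥ 1, where τ = ρ_g(1 + ρ_f C_g) and D = ρ_f C_f C_g/(1 + ρ_f C_g). -/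
/-!
Estimate the Faà di Bruno sum term by term. Since `|g_α| / α! ≤ C_g ρ_g^α L_α` and the parts of a
composition of `k` add up to `k`, the `j`-th term is at most `C_f (ρ_f C_g)^j ρ_g^k (M∘L)_k` times
the number `binom(k-1, j-1)` of compositions of `k` into `j` parts. Summing over `j` with the
binomial theorem gives `|h_k| / k! ≤ C_f ρ_g^k (M∘L)_k ρ_f C_g (1 + ρ_f C_g)^(k-1)`, which is the
claimed bound.
-/

open Finset
open scoped Nat

/-- The set of compositions of `k` into `j` positive parts (encoded with values
in `Fin (k+1)`). -/
def compositionsF (j k : ℕ) : Finset (Fin j → Fin (k + 1)) :=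
  Finset.univ.filter (fun α => (∀ i, 1 ≤ (α i : ℕ)) ∧ (∑ i, (α i : ℕ)) = k)

lemma mem_compositionsF {j k : ℕ} {α : Fin j → Fin (k + 1)} :
    α ∈ compositionsF j k ↔ (∀ i, 1 ≤ (α i : ℕ)) ∧ ∑ i, (α i : ℕ) = k := by
  simp [compositionsF]

/-- Stars and bars: lowering every part by one identifies compositions of `k` into `j` parts
with weak compositions of `k - j` into `j` parts. -/
theorem card_compositionsF {j k : ℕ} (hjk : j ≤ k) :
    #(compositionsF j k) = (k - 1).choose (k - j) := by
  have hcard := card_finsuppAntidiag_nat_eq_choose (s := (univ : Finset (Fin j))) (k - j)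
  rw [card_univ, Fintype.card_fin, Nat.add_sub_cancel' hjk] at hcard
  rw [← hcard]
  refine card_bij (fun α _ => Finsupp.equivFunOnFinite.symm fun i => (α i : ℕ) - 1) ?_ ?_ ?_
  · intro α hα
    obtain ⟨hpos, hsum⟩ := mem_compositionsF.1 hα
    refine mem_finsuppAntidiag.2 ⟨?_, by simp⟩
    simp only [Finsupp.coe_equivFunOnFinite_symm]
    rw [sum_tsub_distrib _ fun i _ => hpos i, hsum]
    simp
  · intro α hα β hβ hαβ
    funext i
    have hαi := (mem_compositionsF.1 hα).1 i
    have hβi := (mem_compositionsF.1 hβ).1 i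
    have := DFunLike.congr_fun hαβ i
    simp only [Finsupp.coe_equivFunOnFinite_symm] at this
    exact Fin.ext (by omega)
  · intro P hP
    obtain ⟨hsum, -⟩ := mem_finsuppAntidiag.1 hP
    have hle : ∀ i, P i + 1 ≤ k := fun i => by
      have := (single_le_sum (f := ⇑P) (fun _ _ => Nat.zero_le _) (mem_univ i)).trans_eq hsum
      have := i.pos
      omega
    refine ⟨fun i => ⟨P i + 1, by have := hle i; omega⟩, ?_, ?_⟩
    · refine mem_compositionsF.2 ⟨fun i => by simp, ?_⟩
      simp only [sum_add_distrib, sum_const, card_univ, Fintype.card_fin, smul_eq_mul, mul_one]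
      rw [hsum]
      omega
    · ext i
      simp

theorem sum_Icc_pow_mul_choose_pred {R : Type*} [CommSemiring R] (x : R) (n : ℕ) :
    ∑ j ∈ Icc 1 (n + 1), x ^ j * (n.choose (j - 1) : R) = x * (1 + x) ^ n := by
  rw [show Icc 1 (n + 1) = Ico (0 + 1) (n + 1 + 1) from (Ico_add_one_right_eq_Icc _ _).symm,
    ← sum_Ico_add', ← range_eq_Ico, add_comm 1 x, add_pow, mul_sum]
  refine sum_congr rfl fun i _ => ?_
  rw [Nat.add_sub_cancel, one_pow, mul_one, pow_succ]
  ring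

lemma abs_div_factorial_le {a C ρ m : ℝ} {j : ℕ} (h : |a| ≤ C * ρ ^ j * j ! * m) :
    |a / j !| ≤ C * ρ ^ j * m := by
  rw [abs_div, Nat.abs_cast, div_le_iff₀ (by positivity)]
  linarith

section FaaDiBrunoTerm

variable {M L f g : ℕ → ℝ} {Cf ρf Cg ρg m : ℝ} {j k : ℕ}

lemma abs_prod_div_factorial_le (hg : ∀ a, 1 ≤ a → |g a| ≤ Cg * ρg ^ a * a ! * L a)
    {α : Fin j → Fin (k + 1)} (hα : α ∈ compositionsF j k) :
    |∏ i, g (α i) / (α i : ℕ)!| ≤ Cg ^ j * ρg ^ k * ∏ i, L (α i) := by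
  obtain ⟨hpos, hsum⟩ := mem_compositionsF.1 hα
  calc |∏ i, g (α i) / (α i : ℕ)!| = ∏ i, |g (α i) / (α i : ℕ)!| := abs_prod _ _
    _ ≤ ∏ i, Cg * ρg ^ (α i : ℕ) * L (α i) :=
      prod_le_prod (fun _ _ => abs_nonneg _) fun i _ => abs_div_factorial_le (hg _ (hpos i))
    _ = Cg ^ j * ρg ^ k * ∏ i, L (α i) := by
      rw [prod_mul_distrib, prod_mul_distrib, prod_const, prod_pow_eq_pow_sum, hsum, card_univ,
        Fintype.card_fin]

lemma abs_faaDiBruno_term_le (hCf : 0 ≤ Cf) (hρf : 0 ≤ ρf) (hCg : 0 ≤ Cg) (hρg : 0 ≤ ρg)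
    (hf : |f j| ≤ Cf * ρf ^ j * j ! * M j)
    (hg : ∀ a, 1 ≤ a → |g a| ≤ Cg * ρg ^ a * a ! * L a)
    (hm : ∀ α ∈ compositionsF j k, M j * ∏ i, L (α i) ≤ m) (hj : 1 ≤ j) (hjk : j ≤ k) :
    |f j / j ! * ∑ α ∈ compositionsF j k, ∏ i, g (α i) / (α i : ℕ)!| ≤
      Cf * ρg ^ k * m * ((ρf * Cg) ^ j * (k - 1).choose (j - 1)) := by
  have hfj := abs_div_factorial_le hf
  calc |f j / j ! * ∑ α ∈ compositionsF j k, ∏ i, g (α i) / (α i : ℕ)!|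
      = |f j / j !| * |∑ α ∈ compositionsF j k, ∏ i, g (α i) / (α i : ℕ)!| := abs_mul _ _
    _ ≤ (Cf * ρf ^ j * M j) * ∑ α ∈ compositionsF j k, Cg ^ j * ρg ^ k * ∏ i, L (α i) :=
      mul_le_mul hfj ((abs_sum_le_sum_abs _ _).trans
          (sum_le_sum fun α hα => abs_prod_div_factorial_le hg hα))
        (abs_nonneg _) ((abs_nonneg _).trans hfj)
    _ = Cf * (ρf * Cg) ^ j * ρg ^ k * ∑ α ∈ compositionsF j k, M j * ∏ i, L (α i) := by
      rw [mul_sum, mul_sum]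
      refine sum_congr rfl fun α _ => ?_
      ring
    _ ≤ Cf * (ρf * Cg) ^ j * ρg ^ k * (#(compositionsF j k) • m) :=
      mul_le_mul_of_nonneg_left (sum_le_card_nsmul _ _ _ hm) (by positivity)
    _ = Cf * ρg ^ k * m * ((ρf * Cg) ^ j * (k - 1).choose (j - 1)) := by
      rw [card_compositionsF hjk, nsmul_eq_mul,
        Nat.choose_symm_of_eq_add (show k - 1 = k - j + (j - 1) by omega)]
      ring

end FaaDiBrunoTerm

theorem formal_composition_estimate_general
    (M L : ℕ → ℝ)
    (MoL : ℕ → ℝ)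
    (hMoL : ∀ k : ℕ, 1 ≤ k → IsGreatest
      {x : ℝ | ∃ j : ℕ, 1 ≤ j ∧ ∃ α : Fin j → ℕ,
        (∀ i, 0 < α i) ∧ (∑ i, α i) = k ∧ x = M j * ∏ i, L (α i)} (MoL k))
    (f g h : ℕ → ℝ)
    (Cf ρf Cg ρg : ℝ) (hCf : 0 < Cf) (hρf : 0 < ρf) (hCg : 0 < Cg) (hρg : 0 < ρg)
    (hf : ∀ j : ℕ, 1 ≤ j → |f j| ≤ Cf * ρf ^ j * (Nat.factorial j) * M j)
    (hg : ∀ a : ℕ, 1 ≤ a → |g a| ≤ Cg * ρg ^ a * (Nat.factorial a) * L a)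
    (hh : ∀ k : ℕ, 1 ≤ k →
      h k / (Nat.factorial k) = ∑ j ∈ Finset.Icc 1 k, (f j / (Nat.factorial j)) *
        ∑ α ∈ compositionsF j k, ∏ i, g ((α i : ℕ)) / (Nat.factorial (α i : ℕ))) :
    ∀ k : ℕ, 1 ≤ k →
      |h k| ≤ (ρf * Cf * Cg / (1 + ρf * Cg)) * (ρg * (1 + ρf * Cg)) ^ k *
        (Nat.factorial k) * MoL k := by
  intro k hk
  obtain ⟨n, rfl⟩ := Nat.exists_eq_add_of_le' hk
  have hterm : ∀ j ∈ Icc 1 (n + 1),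
      |f j / j ! * ∑ α ∈ compositionsF j (n + 1), ∏ i, g (α i) / (α i : ℕ)!| ≤
        Cf * ρg ^ (n + 1) * MoL (n + 1) * ((ρf * Cg) ^ j * n.choose (j - 1)) := by
    intro j hj
    obtain ⟨hj1, hjk⟩ := mem_Icc.1 hj
    refine abs_faaDiBruno_term_le hCf.le hρf.le hCg.le hρg.le (hf j hj1) hg
      (fun α hα => (hMoL _ hk).2 ?_) hj1 hjk
    obtain ⟨hpos, hsum⟩ := mem_compositionsF.1 hα
    exact ⟨j, hj1, fun i => α i, hpos, hsum, rfl⟩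
  have hsum : |h (n + 1) / (n + 1)!| ≤
      Cf * ρg ^ (n + 1) * MoL (n + 1) * (ρf * Cg * (1 + ρf * Cg) ^ n) := by
    rw [hh _ hk, ← sum_Icc_pow_mul_choose_pred, mul_sum]
    exact (abs_sum_le_sum_abs _ _).trans (sum_le_sum hterm)
  have hfac : (0 : ℝ) < (n + 1)! := by positivity
  rw [abs_div, Nat.abs_cast, div_le_iff₀ hfac] at hsum
  refine hsum.trans_eq ?_
  rw [mul_pow, pow_succ (1 + ρf * Cg)]
  field_simp

/-- Composition of formal power series of Denjoy–Carleman type: if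
`|f_j| ≤ C_f ρ_f^j j! M_j` and `|g_α| ≤ C_g ρ_g^α α! L_α` (with `g` having no
constant term), then the Faà di Bruno composite `h` satisfies
`|h_k| ≤ D τ^k k! (M∘L)_k` with `τ = ρ_g (1 + ρ_f C_g)` and
`D = ρ_f C_f C_g / (1 + ρ_f C_g)`. -/
theorem formal_composition_estimate
    (M L : ℕ → ℝ) (hM : ∀ k, 0 < M k) (hL : ∀ k, 0 < L k)
    (MoL : ℕ → ℝ)
    (hMoL : ∀ k : ℕ, 1 ≤ k → IsGreatest
      {x : ℝ | ∃ j : ℕ, 1 ≤ j ∧ ∃ α : Fin j → ℕ,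
        (∀ i, 0 < α i) ∧ (∑ i, α i) = k ∧ x = M j * ∏ i, L (α i)} (MoL k))
    (f g h : ℕ → ℝ)
    (Cf ρf Cg ρg : ℝ) (hCf : 0 < Cf) (hρf : 0 < ρf) (hCg : 0 < Cg) (hρg : 0 < ρg)
    (hf : ∀ j : ℕ, 1 ≤ j → |f j| ≤ Cf * ρf ^ j * (Nat.factorial j) * M j)
    (hg : ∀ a : ℕ, 1 ≤ a → |g a| ≤ Cg * ρg ^ a * (Nat.factorial a) * L a)
    (hh : ∀ k : ℕ, 1 ≤ k →
      h k / (Nat.factorial k) = ∑ j ∈ Finset.Icc 1 k, (f j / (Nat.factorial j)) *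
        ∑ α ∈ compositionsF j k, ∏ i, g ((α i : ℕ)) / (Nat.factorial (α i : ℕ))) :
    ∀ k : ℕ, 1 ≤ k →
      |h k| ≤ (ρf * Cf * Cg / (1 + ρf * Cg)) * (ρg * (1 + ρf * Cg)) ^ k *
        (Nat.factorial k) * MoL k :=
  formal_composition_estimate_general M L MoL hMoL f g h Cf ρf Cg ρg hCf hρf hCg hρg hf hg hh
end

section
/- A formal power series Σ_k a_k t^k with real coefficients has infinite radius of convergence if and only if for every sequence (r_k) of positive reals satisfying r_k r_ℓ ≥ r_{k+ℓ} and r_k ρ^k → 0 for some ρ > 0, and for every δ > 0, the sequence (a_k r_k δ^k) is bounded. -/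
/-!
Write `a_k r_k δ^k = (a_k (δ/ρ)^k) (r_k ρ^k)`: the first factor tends to `0` because
`Σ a_k (δ/ρ)^k` converges, the second by hypothesis, so the product is bounded. Conversely,
`r = 1` is a test sequence, and a bound on `a_k R^k` with `R > |t|` gives convergence at `t`
by comparison with the geometric series of ratio `|t| / R`.
-/

open Filter Topology

theorem exists_forall_abs_le_of_tendsto {u : ℕ → ℝ} {x : ℝ} (h : Tendsto u atTop (𝓝 x)) :
    ∃ C, ∀ k, |u k| ≤ C := by
  obtain ⟨C, hC⟩ := isBounded_iff_forall_norm_le.1 (Metric.isBounded_range_of_tendsto u h)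
  exact ⟨C, fun k => hC _ (Set.mem_range_self k)⟩

theorem exists_forall_abs_mul_le {α : Type*} {f g : α → ℝ} (hf : ∃ C, ∀ k, |f k| ≤ C)
    (hg : ∃ M, ∀ k, |g k| ≤ M) : ∃ C, ∀ k, |f k * g k| ≤ C := by
  obtain ⟨C, hC⟩ := hf
  obtain ⟨M, hM⟩ := hg
  refine ⟨C * M, fun k => ?_⟩
  rw [abs_mul]
  exact mul_le_mul (hC k) (hM k) (abs_nonneg _) ((abs_nonneg _).trans (hC k))

theorem summable_mul_pow_of_abs_mul_pow_le {a : ℕ → ℝ} {R C t : ℝ}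
    (hC : ∀ k, |a k * R ^ k| ≤ C) (ht : |t| < R) : Summable fun k => a k * t ^ k := by
  have hR : 0 < R := (abs_nonneg t).trans_lt ht
  have hq : |t| / R < 1 := (div_lt_one hR).2 ht
  refine Summable.of_norm_bounded
    ((summable_geometric_of_lt_one (by positivity) hq).mul_left C) fun k => ?_
  calc ‖a k * t ^ k‖ = |a k * R ^ k| * (|t| / R) ^ k := by
        rw [Real.norm_eq_abs, abs_mul, abs_mul, abs_pow, abs_of_pos (pow_pos hR k), div_pow]
        field_simp
    _ ≤ C * (|t| / R) ^ k := by gcongr; exact hC k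

/-- A power series `Σ a_k t^k` has infinite radius of convergence (converges for
every real `t`) iff for every positive submultiplicative sequence `(r_k)` with
`r_k ρ^k → 0` for some `ρ > 0` and every `δ > 0`, the sequence `(a_k r_k δ^k)`
is bounded. -/
theorem radius_infinite_iff_test_sequences (a : ℕ → ℝ) :
    (∀ t : ℝ, Summable (fun k : ℕ => a k * t ^ k)) ↔
      (∀ r : ℕ → ℝ, (∀ k, 0 < r k) → (∀ k l : ℕ, r (k + l) ≤ r k * r l) →
        (∃ ρ > (0 : ℝ), Tendsto (fun k : ℕ => r k * ρ ^ k) atTop (nhds 0)) →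
        ∀ δ > (0 : ℝ), ∃ C : ℝ, ∀ k : ℕ, |a k * r k * δ ^ k| ≤ C) := by
  constructor
  · rintro h r - - ⟨ρ, hρ, hlim⟩ δ -
    have split : ∀ k, a k * r k * δ ^ k = a k * (δ / ρ) ^ k * (r k * ρ ^ k) := fun k => by
      rw [div_pow]
      field_simp
    simpa only [split] using exists_forall_abs_mul_le
      (exists_forall_abs_le_of_tendsto (h (δ / ρ)).tendsto_atTop_zero)
      (exists_forall_abs_le_of_tendsto hlim)
  · intro h t
    have hlim : Tendsto (fun k : ℕ => 1 * (1 / 2 : ℝ) ^ k) atTop (𝓝 0) := by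
      simpa using tendsto_pow_atTop_nhds_zero_of_lt_one (by norm_num : (0 : ℝ) ≤ 1 / 2)
        (by norm_num)
    obtain ⟨C, hC⟩ := h (fun _ => 1) (fun _ => one_pos) (fun _ _ => by norm_num)
      ⟨1 / 2, by norm_num, hlim⟩ (|t| + 1) (by positivity)
    exact summable_mul_pow_of_abs_mul_pow_le (fun k => by simpa using hC k) (lt_add_one _)
end

section
/- If Σ_k |a_k| n^k = ∞ for some positive integer n, then setting r_k = 1/n^k, the sequence (a_k r_k (2n^2)^k) = (a_k n^k 2^k) is unbounded. -/
set_option maxHeartbeats 1000000 in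
/-- If `Σ_k |a_k| n^k = ∞` for some positive integer `n`, then with
`r_k = 1/n^k` the sequence `a_k r_k (2 n²)^k = a_k n^k 2^k` is unbounded. -/
theorem unbounded_of_not_summable (a : ℕ → ℝ) (n : ℕ) (hn : 1 ≤ n)
    (hdiv : ¬ Summable (fun k : ℕ => |a k| * (n : ℝ) ^ k)) :
    ∀ C : ℝ, ∃ k : ℕ, C < |a k * (1 / (n : ℝ) ^ k) * (2 * (n : ℝ) ^ 2) ^ k| := by
  have hnpos : (0 : ℝ) < n := by exact_mod_cast hn
  have key : ∀ k : ℕ, |a k * (1 / (n : ℝ) ^ k) * (2 * (n : ℝ) ^ 2) ^ k|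
      = |a k| * (n : ℝ) ^ k * 2 ^ k := by
    intro k
    have hnk : (0 : ℝ) < (n : ℝ) ^ k := pow_pos hnpos k
    rw [abs_mul, abs_mul, abs_of_pos (by positivity : (0:ℝ) < 1 / (n : ℝ) ^ k),
      abs_of_pos (by positivity : (0:ℝ) < (2 * (n : ℝ) ^ 2) ^ k)]
    field_simp
    ring
  by_contra h
  push_neg at h
  obtain ⟨C, hC⟩ := h
  apply hdiv
  refine Summable.of_nonneg_of_le (f := fun k => C * (1 / 2) ^ k)
    (fun k => by positivity) ?_ ?_
  · intro k
    have := hC k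
    rw [key k] at this
    have h2 : (0 : ℝ) < 2 ^ k := by positivity
    simp only [div_pow, one_pow, mul_one_div]
    rw [le_div_iff₀ h2]
    linarith
  · exact (summable_geometric_of_lt_one (by norm_num) (by norm_num)).mul_left C
end

section
/- Let E, F be normed spaces and ℓ : E^k → F a continuous symmetric k-linear map. Then sup{‖ℓ(v,...,v)‖ : ‖v‖ ≤ 1} ≤ ‖ℓ‖ ≤ (2e)^k sup{‖ℓ(v,...,v)‖ : ‖v‖ ≤ 1}, where ‖ℓ‖ is the operator norm sup over ‖v_i‖ ≤ 1 of ‖ℓ(v_1,...,v_k)‖. -/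
section PolarizationAux

variable {E F : Type*} [NormedAddCommGroup E] [NormedSpace ℝ E]
    [NormedAddCommGroup F] [NormedSpace ℝ F]

lemma aux_comb {k : ℕ} (R : Finset (Fin k)) :
    ∑ T ∈ (Finset.univ : Finset (Fin k)).powerset,
      (if R ⊆ T then (-1:ℤ)^k * (-1)^T.card else 0)
      = if R = Finset.univ then 1 else 0 := by
  classical
  rw [Finset.sum_ite, Finset.sum_const_zero, add_zero]
  have key : ∑ T ∈ (Finset.univ.powerset.filter (fun T => R ⊆ T)),
      ((-1:ℤ)^k * (-1)^T.card)
      = ∑ U ∈ ((Finset.univ : Finset (Fin k)) \ R).powerset,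
        ((-1:ℤ)^k * (-1)^(R ∪ U).card) := by
    refine Finset.sum_nbij' (fun T => T \ R) (fun U => R ∪ U) ?_ ?_ ?_ ?_ ?_
    · intro T hT
      simp only [Finset.mem_filter, Finset.mem_powerset] at hT
      simp only [Finset.mem_powerset]
      exact Finset.sdiff_subset_sdiff hT.1 le_rfl
    · intro U hU
      simp only [Finset.mem_powerset] at hU ⊢
      simp [Finset.mem_filter, Finset.subset_union_left]
    · intro T hT
      simp only [Finset.mem_filter, Finset.mem_powerset] at hT
      exact Finset.union_sdiff_of_subset hT.2
    · intro U hU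
      simp only [Finset.mem_powerset] at hU
      exact Finset.union_sdiff_cancel_left (Finset.disjoint_of_subset_right hU Finset.disjoint_sdiff)
    · intro T hT
      simp only [Finset.mem_filter, Finset.mem_powerset] at hT
      rw [Finset.union_sdiff_of_subset hT.2]
  rw [key]
  have hdisj : ∀ U ∈ ((Finset.univ : Finset (Fin k)) \ R).powerset,
      ((-1:ℤ)^k * (-1)^(R ∪ U).card) = ((-1:ℤ)^k * (-1)^R.card) * (-1)^U.card := by
    intro U hU
    simp only [Finset.mem_powerset] at hU
    rw [Finset.card_union_of_disjoint (Finset.disjoint_of_subset_right hU Finset.disjoint_sdiff), pow_add]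
    ring
  rw [Finset.sum_congr rfl hdisj, ← Finset.mul_sum, Finset.sum_powerset_neg_one_pow_card]
  by_cases h : R = Finset.univ
  · subst h; simp [← pow_add, pow_mul]
  · have h2 : ¬ ((Finset.univ : Finset (Fin k)) \ R = ∅) := by
      rw [Finset.sdiff_eq_empty_iff_subset]
      intro hsub
      exact h (le_antisymm (Finset.subset_univ R) hsub)
    simp [h, h2]

lemma polarize {k : ℕ} (ℓ : ContinuousMultilinearMap ℝ (fun _ : Fin k => E) F)
    (hsym : ∀ (σ : Equiv.Perm (Fin k)) (v : Fin k → E), ℓ (v ∘ σ) = ℓ v) (v : Fin k → E) :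
    ∑ T ∈ (Finset.univ : Finset (Fin k)).powerset,
        ((-1:ℤ)^k * (-1)^T.card) • ℓ (fun _ => ∑ i ∈ T, v i)
      = (Nat.factorial k : ℤ) • ℓ v := by
  classical
  calc
    ∑ T ∈ (Finset.univ : Finset (Fin k)).powerset,
        ((-1:ℤ)^k * (-1)^T.card) • ℓ (fun _ => ∑ i ∈ T, v i)
      = ∑ T ∈ (Finset.univ : Finset (Fin k)).powerset,
          ∑ r ∈ (Finset.univ : Finset (Fin k → Fin k)),
            (if Finset.image r Finset.univ ⊆ T then (-1:ℤ)^k * (-1)^T.card else 0) • ℓ (v ∘ r) := by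
        refine Finset.sum_congr rfl fun T _ => ?_
        have key : ∀ r : Fin k → Fin k,
            (if Finset.image r Finset.univ ⊆ T then (-1:ℤ)^k * (-1)^T.card else 0) • ℓ (v ∘ r)
            = if r ∈ Fintype.piFinset (fun _ : Fin k => T)
              then ((-1:ℤ)^k * (-1)^T.card) • ℓ (v ∘ r) else 0 := by
          intro r
          simp only [Fintype.mem_piFinset]
          by_cases h : Finset.image r Finset.univ ⊆ T
          · rw [if_pos h, if_pos (fun j => h (Finset.mem_image_of_mem r (Finset.mem_univ j)))]
          · rw [if_neg h, if_neg (fun h' => h (Finset.image_subset_iff.2 fun x _ => h' x)), zero_smul]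
        symm
        calc ∑ r ∈ (Finset.univ : Finset (Fin k → Fin k)),
              (if Finset.image r Finset.univ ⊆ T then (-1:ℤ)^k * (-1)^T.card else 0) • ℓ (v ∘ r)
            = ∑ r ∈ (Finset.univ : Finset (Fin k → Fin k)),
              (if r ∈ Fintype.piFinset (fun _ : Fin k => T)
                then ((-1:ℤ)^k * (-1)^T.card) • ℓ (v ∘ r) else 0) :=
              Finset.sum_congr rfl fun r _ => key r
          _ = ∑ r ∈ Fintype.piFinset (fun _ : Fin k => T),
              ((-1:ℤ)^k * (-1)^T.card) • ℓ (v ∘ r) := by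
              rw [Finset.sum_ite_mem, Finset.univ_inter]
          _ = ((-1:ℤ)^k * (-1)^T.card) • ℓ (fun _ => ∑ i ∈ T, v i) := by
              rw [ℓ.map_sum_finset (fun _ j => v j) (fun _ => T), Finset.smul_sum]
              rfl
    _ = ∑ r ∈ (Finset.univ : Finset (Fin k → Fin k)),
          (∑ T ∈ (Finset.univ : Finset (Fin k)).powerset,
            (if Finset.image r Finset.univ ⊆ T then (-1:ℤ)^k * (-1)^T.card else 0)) • ℓ (v ∘ r) := by
        rw [Finset.sum_comm]
        exact Finset.sum_congr rfl fun r _ => (Finset.sum_smul ..).symm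
    _ = ∑ r ∈ (Finset.univ : Finset (Fin k → Fin k)),
          (if Finset.image r Finset.univ = Finset.univ then (1:ℤ) else 0) • ℓ (v ∘ r) := by
        exact Finset.sum_congr rfl fun r _ => by rw [aux_comb]
    _ = ∑ r ∈ (Finset.univ : Finset (Fin k → Fin k)).filter
          (fun r => Finset.image r Finset.univ = Finset.univ), ℓ (v ∘ r) := by
        rw [Finset.sum_filter]
        exact Finset.sum_congr rfl fun r _ => by split <;> simp
    _ = ∑ σ : Equiv.Perm (Fin k), ℓ (v ∘ σ) := by
        have hbij : ∀ r ∈ (Finset.univ : Finset (Fin k → Fin k)).filter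
            (fun r => Finset.image r Finset.univ = Finset.univ), Function.Bijective r := by
          intro r hr
          simp only [Finset.mem_filter] at hr
          refine Finite.surjective_iff_bijective.mp fun y => ?_
          have hy : y ∈ Finset.image r Finset.univ := by rw [hr.2]; exact Finset.mem_univ y
          obtain ⟨x, _, hx⟩ := Finset.mem_image.mp hy
          exact ⟨x, hx⟩
        refine Finset.sum_bij' (fun r hr => Equiv.ofBijective r (hbij r hr))
          (fun σ _ => ⇑σ) ?_ ?_ ?_ ?_ ?_
        · intro r hr; exact Finset.mem_univ _
        · intro σ _
          simp only [Finset.mem_filter, Finset.mem_univ, true_and]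
          exact Finset.eq_univ_iff_forall.mpr fun y =>
            Finset.mem_image.mpr ⟨σ.symm y, Finset.mem_univ _, σ.apply_symm_apply y⟩
        · intro r hr; rfl
        · intro σ _; exact Equiv.ext fun x => rfl
        · intro r hr; rfl
    _ = (Nat.factorial k : ℤ) • ℓ v := by
        rw [Finset.sum_congr rfl fun σ _ => hsym σ v, Finset.sum_const, Finset.card_univ,
          Fintype.card_perm, Fintype.card_fin, natCast_zsmul]

lemma kpow_le (k : ℕ) : (k:ℝ)^k ≤ (Nat.factorial k : ℝ) * Real.exp 1 ^ k := by
  have h1 : (k:ℝ)^k / (Nat.factorial k) ≤ Real.exp k := by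
    refine le_trans ?_ (Real.sum_le_exp_of_nonneg (by positivity) (k+1))
    exact Finset.single_le_sum (f := fun i => (k:ℝ)^i / Nat.factorial i)
      (fun i _ => by positivity) (Finset.self_mem_range_succ k)
  have h2 : Real.exp k = Real.exp 1 ^ k := by
    rw [← Real.exp_nat_mul, mul_one]
  have hfac : (0:ℝ) < (Nat.factorial k : ℝ) := by positivity
  rw [div_le_iff₀ hfac] at h1
  calc (k:ℝ)^k ≤ Real.exp k * Nat.factorial k := h1
    _ = (Nat.factorial k : ℝ) * Real.exp 1 ^ k := by rw [h2]; ring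

end PolarizationAux

/-- Polarization inequality: for a continuous symmetric `k`-linear map `ℓ`, the
supremum `S` of `‖ℓ(v,…,v)‖` over `‖v‖ ≤ 1` satisfies
`S ≤ ‖ℓ‖ ≤ (2e)^k * S`. -/
theorem polarization_inequality
    {E F : Type*} [NormedAddCommGroup E] [NormedSpace ℝ E]
    [NormedAddCommGroup F] [NormedSpace ℝ F]
    (k : ℕ) (ℓ : ContinuousMultilinearMap ℝ (fun _ : Fin k => E) F)
    (hsym : ∀ (σ : Equiv.Perm (Fin k)) (v : Fin k → E), ℓ (v ∘ σ) = ℓ v)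
    (S : ℝ)
    (hS : IsLUB {x : ℝ | ∃ v : E, ‖v‖ ≤ 1 ∧ x = ‖ℓ (fun _ => v)‖} S) :
    S ≤ ‖ℓ‖ ∧ ‖ℓ‖ ≤ (2 * Real.exp 1) ^ k * S := by
  have hub := hS.1
  have hSnonneg : 0 ≤ S :=
    le_trans (norm_nonneg _) (hub ⟨0, by simp, rfl⟩)
  -- diagonal bound
  have hdiag : ∀ w : E, ‖ℓ (fun _ => w)‖ ≤ S * ‖w‖^k := by
    intro w
    by_cases hw : w = 0
    · subst hw
      rcases Nat.eq_zero_or_pos k with hk | hk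
      · subst hk
        simpa using hub ⟨0, by simp, rfl⟩
      · have h0 : ℓ (fun _ => (0:E)) = 0 := ℓ.map_coord_zero ⟨0, hk⟩ rfl
        rw [h0, norm_zero, norm_zero, zero_pow hk.ne', mul_zero]
    · have hn : (0:ℝ) < ‖w‖ := norm_pos_iff.mpr hw
      set u := ‖w‖⁻¹ • w with hu
      have hu1 : ‖u‖ ≤ 1 := by
        rw [hu, norm_smul, norm_inv, norm_norm, inv_mul_cancel₀ hn.ne']
      have hrw : (fun _ : Fin k => w) = fun _ : Fin k => ‖w‖ • u := by
        funext _; rw [hu, smul_inv_smul₀ hn.ne']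
      rw [hrw, ℓ.map_smul_univ (fun _ => ‖w‖) (fun _ => u), norm_smul]
      simp only [Finset.prod_const, Finset.card_univ, Fintype.card_fin]
      rw [Real.norm_eq_abs, abs_of_nonneg (by positivity)]
      rw [mul_comm (S) (‖w‖^k)]
      exact mul_le_mul_of_nonneg_left (hub ⟨u, hu1, rfl⟩) (by positivity)
  constructor
  · refine hS.2 ?_
    rintro x ⟨v, hv, rfl⟩
    calc ‖ℓ (fun _ => v)‖ ≤ ‖ℓ‖ * ∏ _i : Fin k, ‖v‖ := ℓ.le_opNorm _
      _ ≤ ‖ℓ‖ * 1 := mul_le_mul_of_nonneg_left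
          (Finset.prod_le_one (fun _ _ => norm_nonneg v) (fun _ _ => hv)) (ℓ.opNorm_nonneg)
      _ = ‖ℓ‖ := mul_one _
  · -- bound on unit vectors
    have hunit : ∀ m : Fin k → E, (∀ i, ‖m i‖ ≤ 1) → ‖ℓ m‖ ≤ (2 * Real.exp 1) ^ k * S := by
      intro m hm
      have hpol := polarize ℓ hsym m
      have key : (Nat.factorial k : ℝ) * ‖ℓ m‖ ≤ (Nat.factorial k : ℝ) * ((2 * Real.exp 1) ^ k * S) := by
        have h1 : (Nat.factorial k : ℝ) * ‖ℓ m‖ = ‖(Nat.factorial k : ℤ) • ℓ m‖ := by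
          rw [← Int.cast_smul_eq_zsmul ℝ, norm_smul]
          simp
        rw [h1, ← hpol]
        calc ‖∑ T ∈ (Finset.univ : Finset (Fin k)).powerset,
                ((-1:ℤ)^k * (-1)^T.card) • ℓ (fun _ => ∑ i ∈ T, m i)‖
            ≤ ∑ T ∈ (Finset.univ : Finset (Fin k)).powerset,
                ‖((-1:ℤ)^k * (-1)^T.card) • ℓ (fun _ => ∑ i ∈ T, m i)‖ := norm_sum_le _ _
          _ ≤ ∑ _T ∈ (Finset.univ : Finset (Fin k)).powerset, S * (k:ℝ)^k := by
              refine Finset.sum_le_sum fun T _ => ?_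
              rw [← Int.cast_smul_eq_zsmul ℝ, norm_smul]
              have hone : ‖((((-1:ℤ)^k * (-1)^T.card) : ℤ) : ℝ)‖ = 1 := by
                rw [Real.norm_eq_abs]
                push_cast
                rw [abs_mul, abs_pow, abs_pow]
                simp
              rw [hone, one_mul]
              refine le_trans (hdiag _) ?_
              refine mul_le_mul_of_nonneg_left ?_ hSnonneg
              have hsum : ‖∑ i ∈ T, m i‖ ≤ (k:ℝ) := by
                refine le_trans (norm_sum_le _ _) ?_
                calc ∑ i ∈ T, ‖m i‖ ≤ ∑ _i ∈ T, (1:ℝ) :=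
                      Finset.sum_le_sum fun i _ => hm i
                  _ = T.card := by simp
                  _ ≤ (k:ℝ) := by
                      exact_mod_cast le_trans (Finset.card_le_card (Finset.subset_univ T))
                        (by simp [Finset.card_univ])
              exact pow_le_pow_left₀ (norm_nonneg _) hsum k
          _ = 2^k * (S * (k:ℝ)^k) := by
              rw [Finset.sum_const, Finset.card_powerset, Finset.card_univ, Fintype.card_fin]
              simp [nsmul_eq_mul]
          _ ≤ (Nat.factorial k : ℝ) * ((2 * Real.exp 1) ^ k * S) := by
              calc 2^k * (S * (k:ℝ)^k)
                  ≤ 2^k * (S * ((Nat.factorial k : ℝ) * Real.exp 1 ^ k)) := by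
                    refine mul_le_mul_of_nonneg_left (mul_le_mul_of_nonneg_left (kpow_le k) hSnonneg) (by positivity)
                _ = (Nat.factorial k : ℝ) * ((2 * Real.exp 1) ^ k * S) := by ring
      have hfac : (0:ℝ) < (Nat.factorial k : ℝ) := by positivity
      exact le_of_mul_le_mul_left key hfac
    refine ℓ.opNorm_le_bound (by positivity) fun m => ?_
    by_cases hm : ∀ i, m i ≠ 0
    · set u : Fin k → E := fun i => ‖m i‖⁻¹ • m i with hu
      have hu1 : ∀ i, ‖u i‖ ≤ 1 := by
        intro i
        rw [hu]
        simp only []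
        rw [norm_smul, norm_inv, norm_norm,
          inv_mul_cancel₀ (norm_ne_zero_iff.mpr (hm i))]
      have hrw : m = fun i => ‖m i‖ • u i := by
        funext i
        rw [hu]
        simp only []
        rw [smul_inv_smul₀ (norm_ne_zero_iff.mpr (hm i))]
      calc ‖ℓ m‖ = ‖(∏ i, ‖m i‖) • ℓ u‖ := by
            conv_lhs => rw [hrw]
            rw [ℓ.map_smul_univ (fun i => ‖m i‖) u]
        _ = (∏ i, ‖m i‖) * ‖ℓ u‖ := by
            rw [norm_smul, Real.norm_eq_abs, abs_of_nonneg (by positivity)]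
        _ ≤ (∏ i, ‖m i‖) * ((2 * Real.exp 1) ^ k * S) :=
            mul_le_mul_of_nonneg_left (hunit u hu1) (by positivity)
        _ = (2 * Real.exp 1) ^ k * S * ∏ i, ‖m i‖ := by ring
    · push_neg at hm
      obtain ⟨i, hi⟩ := hm
      rw [ℓ.map_coord_zero i hi, norm_zero]
      have : ∏ j, ‖m j‖ = 0 := Finset.prod_eq_zero (Finset.mem_univ i) (by rw [hi, norm_zero])
      rw [this, mul_zero]
end

section
/- Let E, F be Banach spaces and K ⊆ E compact convex. The space C^∞(E ⊇ K, F) of Whitney jets on K, i.e., sequences f = (f^k)_k of continuous maps f^k : K → L^k_{sym}(E,F) with all remainder seminorms |||f|||_{n,k} finite, is complete (a Fréchet space) with respect to the seminorms ‖f‖_n := sup_{x∈K} ‖f^n(x)‖ and |||f|||_{n,k} := sup_{x≠y∈K} (n+1)! ‖(R_y^n f)^k(x)‖ / ‖x−y‖^{n+1}. -/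
open Finset

variable {E F : Type*} [NormedAddCommGroup E] [NormedSpace ℝ E]
  [NormedAddCommGroup F] [NormedSpace ℝ F]

/-- An infinite jet on a subset of `E`: for each `k` a (symmetric) continuous
`k`-linear map valued function. -/
def WhitneyJet (E F : Type*) [NormedAddCommGroup E] [NormedSpace ℝ E]
    [NormedAddCommGroup F] [NormedSpace ℝ F] :=
  ∀ k : ℕ, E → ContinuousMultilinearMap ℝ (fun _ : Fin k => E) F

/-- The Taylor remainder `(R_y^n f)^k (x)` of a jet, applied to vectors `v`. -/
noncomputable def jetRemainder (f : WhitneyJet E F) (n k : ℕ) (x y : E) (v : Fin k → E) : F :=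
  f k x v - ∑ j ∈ Finset.range (n + 1), ((Nat.factorial j : ℝ)⁻¹) •
    f (j + k) y (Fin.append (fun _ : Fin j => x - y) v)

/-- `‖f‖_n ≤ c` on `K`. -/
def jetNormLe (K : Set E) (f : WhitneyJet E F) (n : ℕ) (c : ℝ) : Prop :=
  ∀ a ∈ K, ‖f n a‖ ≤ c

/-- `|||f|||_{n,k} ≤ c` on `K`. -/
def jetRemLe (K : Set E) (f : WhitneyJet E F) (n k : ℕ) (c : ℝ) : Prop :=
  ∀ x ∈ K, ∀ y ∈ K, x ≠ y → ∀ v : Fin k → E, (∀ i, ‖v i‖ ≤ 1) →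
    (Nat.factorial (n + 1) : ℝ) * ‖jetRemainder f n k x y v‖ ≤ c * ‖x - y‖ ^ (n + 1)

/-- Difference of jets. -/
def jetSub (f g : WhitneyJet E F) : WhitneyJet E F := fun k a => f k a - g k a

/-- Membership in the space `C^∞(E ⊇ K, F)` of Whitney jets on `K`: continuity
of all components and finiteness of all seminorms. -/
def IsWhitneyJet (K : Set E) (f : WhitneyJet E F) : Prop :=
  (∀ k, ContinuousOn (fun a => f k a) K) ∧
  (∀ n, ∃ c : ℝ, jetNormLe K f n c) ∧
  (∀ n k, ∃ c : ℝ, jetRemLe K f n k c)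

/-!
The limit is the pointwise limit `f^k(x) = lim_p f_p^k(x)`, which exists since the spaces of
continuous multilinear maps into `F` are complete. A remainder `(R_y^n f)^k(x)(v)` is a finite
combination of evaluations of components, so it is the pointwise limit of the remainders of the
`f_p`; hence every seminorm ball is closed under pointwise convergence on `K`, and the Cauchy bounds
on `f_p - f_q` pass to the limit `q → ∞`. Then `f` is within `1` of some `f_p` in each seminorm, and
its components are uniform limits of continuous maps.
-/

open Filter Topology

theorem jetRemainder_jetSub (f g : WhitneyJet E F) (n k : ℕ) (x y : E) (v : Fin k → E) :
    jetRemainder (jetSub f g) n k x y v = jetRemainder f n k x y v - jetRemainder g n k x y v := by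
  simp only [jetRemainder, jetSub, sub_apply, smul_sub, sum_sub_distrib]
  abel

section PointwiseConvergence

variable {ι : Type*} {l : Filter ι} {K : Set E} {G : ι → WhitneyJet E F} {g : WhitneyJet E F}

theorem tendsto_jetSub_left (f : WhitneyJet E F)
    (hG : ∀ k, ∀ x ∈ K, Tendsto (fun i => G i k x) l (𝓝 (g k x))) :
    ∀ k, ∀ x ∈ K, Tendsto (fun i => jetSub f (G i) k x) l (𝓝 (jetSub f g k x)) :=
  fun k x hx => tendsto_const_nhds.sub (hG k x hx)

theorem tendsto_jetRemainder (hG : ∀ k, ∀ x ∈ K, Tendsto (fun i => G i k x) l (𝓝 (g k x)))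
    (n k : ℕ) {x y : E} (hx : x ∈ K) (hy : y ∈ K) (v : Fin k → E) :
    Tendsto (fun i => jetRemainder (G i) n k x y v) l (𝓝 (jetRemainder g n k x y v)) := by
  have happly : ∀ m, ∀ z ∈ K, ∀ w : Fin m → E, Tendsto (fun i => G i m z w) l (𝓝 (g m z w)) :=
    fun m z hz w => ((continuous_eval_const w).tendsto _).comp (hG m z hz)
  exact (happly k x hx v).sub <| tendsto_finsetSum _ fun j _ => (happly _ y hy _).const_smul _

variable [l.NeBot]

theorem jetNormLe_of_tendsto (hG : ∀ k, ∀ x ∈ K, Tendsto (fun i => G i k x) l (𝓝 (g k x)))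
    {n : ℕ} {c : ℝ} (hc : ∀ᶠ i in l, jetNormLe K (G i) n c) : jetNormLe K g n c :=
  fun a ha => le_of_tendsto (hG n a ha).norm (hc.mono fun _ hi => hi a ha)

theorem jetRemLe_of_tendsto (hG : ∀ k, ∀ x ∈ K, Tendsto (fun i => G i k x) l (𝓝 (g k x)))
    {n k : ℕ} {c : ℝ} (hc : ∀ᶠ i in l, jetRemLe K (G i) n k c) : jetRemLe K g n k c :=
  fun x hx y hy hxy v hv => le_of_tendsto
    ((tendsto_jetRemainder hG n k hx hy v).norm.const_mul _)
    (hc.mono fun _ hi => hi x hx y hy hxy v hv)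

end PointwiseConvergence

theorem jetNormLe_of_jetSub {K : Set E} {f g : WhitneyJet E F} {n : ℕ} {c d : ℝ}
    (hg : jetNormLe K g n c) (hgf : jetNormLe K (jetSub g f) n d) : jetNormLe K f n (c + d) :=
  fun a ha => (norm_le_norm_add_norm_sub (g n a) (f n a)).trans (add_le_add (hg a ha) (hgf a ha))

theorem jetRemLe_of_jetSub {K : Set E} {f g : WhitneyJet E F} {n k : ℕ} {c d : ℝ}
    (hg : jetRemLe K g n k c) (hgf : jetRemLe K (jetSub g f) n k d) :
    jetRemLe K f n k (c + d) := by
  intro x hx y hy hxy v hv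
  have hfg := hgf x hx y hy hxy v hv
  rw [jetRemainder_jetSub] at hfg
  have htri := mul_le_mul_of_nonneg_left
    (norm_le_norm_add_norm_sub (jetRemainder g n k x y v) (jetRemainder f n k x y v))
    (Nat.cast_nonneg (n + 1).factorial : (0 : ℝ) ≤ (n + 1).factorial)
  linarith [hg x hx y hy hxy v hv]

theorem continuousOn_of_jetNormLe_jetSub {K : Set E} {Fs : ℕ → WhitneyJet E F}
    {f : WhitneyJet E F} {k : ℕ} (hcont : ∀ p, ContinuousOn (Fs p k) K)
    (hconv : ∀ ε > (0 : ℝ), ∃ N, ∀ p ≥ N, jetNormLe K (jetSub (Fs p) f) k ε) :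
    ContinuousOn (f k) K := by
  have hunif : TendstoUniformlyOn (fun p => Fs p k) (f k) atTop K := by
    rw [Metric.tendstoUniformlyOn_iff]
    intro ε hε
    obtain ⟨N, hN⟩ := hconv (ε / 2) (half_pos hε)
    filter_upwards [eventually_ge_atTop N] with p hp x hx
    rw [dist_comm, dist_eq_norm]
    exact (hN p hp x hx).trans_lt (half_lt_self hε)
  exact hunif.continuousOn (Frequently.of_forall hcont)

theorem tendsto_limUnder_of_cauchy_jetNormLe [CompleteSpace F] {K : Set E}
    {Fs : ℕ → WhitneyJet E F} {k : ℕ}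
    (hcauchy : ∀ ε > (0 : ℝ), ∃ N : ℕ, ∀ p ≥ N, ∀ q ≥ N, jetNormLe K (jetSub (Fs p) (Fs q)) k ε)
    {x : E} (hx : x ∈ K) :
    Tendsto (fun p => Fs p k x) atTop (𝓝 (limUnder atTop fun p => Fs p k x)) := by
  refine CauchySeq.tendsto_limUnder (Metric.cauchySeq_iff'.2 fun ε hε => ?_)
  obtain ⟨N, hN⟩ := hcauchy (ε / 2) (half_pos hε)
  exact ⟨N, fun p hp => by
    rw [dist_eq_norm]
    exact (hN p hp N le_rfl x hx).trans_lt (half_lt_self hε)⟩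

theorem whitneyJet_complete_general
    [CompleteSpace F]
    (K : Set E)
    (Fs : ℕ → WhitneyJet E F) (hmem : ∀ p, IsWhitneyJet K (Fs p))
    (hCq : ∀ n : ℕ, ∀ ε > (0 : ℝ), ∃ N : ℕ, ∀ p ≥ N, ∀ q ≥ N,
      jetNormLe K (jetSub (Fs p) (Fs q)) n ε)
    (hCr : ∀ n k : ℕ, ∀ ε > (0 : ℝ), ∃ N : ℕ, ∀ p ≥ N, ∀ q ≥ N,
      jetRemLe K (jetSub (Fs p) (Fs q)) n k ε) :
    ∃ f : WhitneyJet E F, IsWhitneyJet K f ∧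
      (∀ n : ℕ, ∀ ε > (0 : ℝ), ∃ N : ℕ, ∀ p ≥ N,
        jetNormLe K (jetSub (Fs p) f) n ε) ∧
      (∀ n k : ℕ, ∀ ε > (0 : ℝ), ∃ N : ℕ, ∀ p ≥ N,
        jetRemLe K (jetSub (Fs p) f) n k ε) := by
  set f : WhitneyJet E F := fun k x => limUnder atTop fun p => Fs p k x
  have hlim : ∀ k, ∀ x ∈ K, Tendsto (fun q => Fs q k x) atTop (𝓝 (f k x)) :=
    fun k x hx => tendsto_limUnder_of_cauchy_jetNormLe (hCq k) hx
  have hnorm : ∀ n, ∀ ε > (0 : ℝ), ∃ N, ∀ p ≥ N, jetNormLe K (jetSub (Fs p) f) n ε := by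
    intro n ε hε
    obtain ⟨N, hN⟩ := hCq n ε hε
    exact ⟨N, fun p hp => jetNormLe_of_tendsto (tendsto_jetSub_left _ hlim)
      ((eventually_ge_atTop N).mono (hN p hp))⟩
  have hrem : ∀ n k, ∀ ε > (0 : ℝ), ∃ N, ∀ p ≥ N, jetRemLe K (jetSub (Fs p) f) n k ε := by
    intro n k ε hε
    obtain ⟨N, hN⟩ := hCr n k ε hε
    exact ⟨N, fun p hp => jetRemLe_of_tendsto (tendsto_jetSub_left _ hlim)
      ((eventually_ge_atTop N).mono (hN p hp))⟩
  refine ⟨f, ⟨fun k => continuousOn_of_jetNormLe_jetSub (fun p => (hmem p).1 k) (hnorm k),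
    fun n => ?_, fun n k => ?_⟩, hnorm, hrem⟩
  · obtain ⟨N, hN⟩ := hnorm n 1 one_pos
    obtain ⟨c, hc⟩ := (hmem N).2.1 n
    exact ⟨c + 1, jetNormLe_of_jetSub hc (hN N le_rfl)⟩
  · obtain ⟨N, hN⟩ := hrem n k 1 one_pos
    obtain ⟨c, hc⟩ := (hmem N).2.2 n k
    exact ⟨c + 1, jetRemLe_of_jetSub hc (hN N le_rfl)⟩

/-- The space of Whitney jets on a compact convex subset `K` of a Banach space,
with values in a Banach space, is complete: every sequence which is Cauchy for
all seminorms `‖·‖_n` and `|||·|||_{n,k}` converges in all these seminorms to a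
Whitney jet. -/
theorem whitneyJet_complete
    [CompleteSpace E] [CompleteSpace F]
    (K : Set E) (hK : IsCompact K) (hKconv : Convex ℝ K)
    (Fs : ℕ → WhitneyJet E F) (hmem : ∀ p, IsWhitneyJet K (Fs p))
    (hCq : ∀ n : ℕ, ∀ ε > (0 : ℝ), ∃ N : ℕ, ∀ p ≥ N, ∀ q ≥ N,
      jetNormLe K (jetSub (Fs p) (Fs q)) n ε)
    (hCr : ∀ n k : ℕ, ∀ ε > (0 : ℝ), ∃ N : ℕ, ∀ p ≥ N, ∀ q ≥ N,
      jetRemLe K (jetSub (Fs p) (Fs q)) n k ε) :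
    ∃ f : WhitneyJet E F, IsWhitneyJet K f ∧
      (∀ n : ℕ, ∀ ε > (0 : ℝ), ∃ N : ℕ, ∀ p ≥ N,
        jetNormLe K (jetSub (Fs p) f) n ε) ∧
      (∀ n k : ℕ, ∀ ε > (0 : ℝ), ∃ N : ℕ, ∀ p ≥ N,
        jetRemLe K (jetSub (Fs p) f) n k ε) :=
  whitneyJet_complete_general K Fs hmem hCq hCr
end

section
/- Let E be a Banach space, U ⊆ E open, f ∈ C^∞(U, ℝ), and M = (M_k) a positive sequence. Then f is of Beurling class C^{(M)} (i.e., for every compact K ⊆ U and every ρ > 0 the set {‖f^{(k)}(x)‖/(ρ^k k! M_k) : x ∈ K, k ∈ ℕ} is bounded) if and only if for every compact K ⊆ U and every sequence (r_k) of positive reals with r_k r_ℓ ≥ r_{k+ℓ} and r_k ρ^k → 0 for some ρ > 0, and every δ > 0, the set {‖f^{(k)}(x)‖ r_k δ^k/(k! M_k) : x ∈ K, k ∈ ℕ} is bounded. -/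
open Filter

/-- Beurling class membership via submultiplicative test sequences (Lemma 4.7):
a smooth function on an open subset of a Banach space is of class `C^{(M)}` iff
for every compact `K`, every positive submultiplicative sequence `(r_k)` with
`r_k ρ^k → 0` for some `ρ > 0`, and every `δ > 0`, the set
`{‖f^{(k)}(x)‖ r_k δ^k / (k! M_k)}` is bounded. -/
theorem beurling_iff_test_sequences
    {E : Type*} [NormedAddCommGroup E] [NormedSpace ℝ E] [CompleteSpace E]
    (U : Set E) (hU : IsOpen U) (f : E → ℝ) (hf : ContDiffOn ℝ (⊤ : ℕ∞) f U)
    (M : ℕ → ℝ) (hM : ∀ k, 0 < M k) :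
    (∀ K : Set E, IsCompact K → K ⊆ U → ∀ ρ > (0 : ℝ), ∃ C : ℝ, ∀ x ∈ K, ∀ k : ℕ,
        ‖iteratedFDerivWithin ℝ k f U x‖ ≤ C * ρ ^ k * (Nat.factorial k) * M k)
    ↔
    (∀ K : Set E, IsCompact K → K ⊆ U →
      ∀ r : ℕ → ℝ, (∀ k, 0 < r k) → (∀ k l : ℕ, r (k + l) ≤ r k * r l) →
      (∃ ρ > (0 : ℝ), Tendsto (fun k : ℕ => r k * ρ ^ k) atTop (nhds 0)) →
      ∀ δ > (0 : ℝ), ∃ C : ℝ, ∀ x ∈ K, ∀ k : ℕ,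
        ‖iteratedFDerivWithin ℝ k f U x‖ * r k * δ ^ k
          ≤ C * (Nat.factorial k) * M k) := by
  constructor
  · intro H K hK hKU r hr hsub hex δ hδ
    obtain ⟨ρ₀, hρ₀, htend⟩ := hex
    -- the sequence r k * ρ₀^k is bounded above
    obtain ⟨B, hB⟩ := htend.bddAbove_range
    have hBmem : ∀ k, r k * ρ₀ ^ k ≤ B := fun k => hB ⟨k, rfl⟩
    obtain ⟨C, hC⟩ := H K hK hKU (ρ₀ / δ) (div_pos hρ₀ hδ)
    refine ⟨max C 0 * B, fun x hx k => ?_⟩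
    have h1 := hC x hx k
    have hrδ : 0 ≤ r k * δ ^ k := le_of_lt (mul_pos (hr k) (pow_pos hδ k))
    have h2 : ‖iteratedFDerivWithin ℝ k f U x‖ * r k * δ ^ k
        ≤ (C * (ρ₀ / δ) ^ k * (Nat.factorial k) * M k) * (r k * δ ^ k) := by
      calc ‖iteratedFDerivWithin ℝ k f U x‖ * r k * δ ^ k
          = ‖iteratedFDerivWithin ℝ k f U x‖ * (r k * δ ^ k) := by ring
        _ ≤ (C * (ρ₀ / δ) ^ k * (Nat.factorial k) * M k) * (r k * δ ^ k) :=
            mul_le_mul_of_nonneg_right h1 hrδ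
    have hpow : (ρ₀ / δ) ^ k * δ ^ k = ρ₀ ^ k := by
      rw [div_pow, div_mul_cancel₀]
      exact pow_ne_zero k (ne_of_gt hδ)
    have h3 : (C * (ρ₀ / δ) ^ k * (Nat.factorial k) * M k) * (r k * δ ^ k)
        = C * (r k * ρ₀ ^ k) * (Nat.factorial k) * M k := by
      rw [← hpow]; ring
    have h4 : C * (r k * ρ₀ ^ k) ≤ max C 0 * B := by
      rcases le_or_gt C 0 with hC0 | hC0
      · have hpos : 0 < r k * ρ₀ ^ k := mul_pos (hr k) (pow_pos hρ₀ k)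
        have hB0 : 0 < B := lt_of_lt_of_le (mul_pos (hr 0) (pow_pos hρ₀ 0)) (hBmem 0)
        nlinarith [le_max_right C 0]
      · calc C * (r k * ρ₀ ^ k) ≤ C * B := by
              exact mul_le_mul_of_nonneg_left (hBmem k) (le_of_lt hC0)
          _ ≤ max C 0 * B := by
              have hB0 : 0 < B := lt_of_lt_of_le (mul_pos (hr 0) (pow_pos hρ₀ 0)) (hBmem 0)
              exact mul_le_mul_of_nonneg_right (le_max_left C 0) (le_of_lt hB0)
    have hfac : (0 : ℝ) ≤ (Nat.factorial k) * M k :=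
      le_of_lt (mul_pos (by positivity) (hM k))
    calc ‖iteratedFDerivWithin ℝ k f U x‖ * r k * δ ^ k
        ≤ C * (r k * ρ₀ ^ k) * (Nat.factorial k) * M k := by rw [← h3]; exact h2
      _ ≤ max C 0 * B * (Nat.factorial k) * M k := by
          have := mul_le_mul_of_nonneg_right h4 hfac
          calc C * (r k * ρ₀ ^ k) * (Nat.factorial k) * M k
              = C * (r k * ρ₀ ^ k) * ((Nat.factorial k) * M k) := by ring
            _ ≤ max C 0 * B * ((Nat.factorial k) * M k) := this
            _ = max C 0 * B * (Nat.factorial k) * M k := by ring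
  · intro H K hK hKU ρ hρ
    have hρinv : (0 : ℝ) < 1 / ρ := by positivity
    have hsub : ∀ k l : ℕ, (1 / ρ) ^ (k + l) ≤ (1 / ρ) ^ k * (1 / ρ) ^ l := by
      intro k l; rw [pow_add]
    have htend : Tendsto (fun k : ℕ => (1 / ρ) ^ k * (ρ / 2) ^ k) atTop (nhds 0) := by
      have : (fun k : ℕ => (1 / ρ) ^ k * (ρ / 2) ^ k) = fun k : ℕ => (1 / 2 : ℝ) ^ k := by
        funext k
        rw [← mul_pow]
        congr 1
        field_simp
      rw [this]
      exact tendsto_pow_atTop_nhds_zero_of_lt_one (by norm_num) (by norm_num)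
    obtain ⟨C, hC⟩ := H K hK hKU (fun k => (1 / ρ) ^ k) (fun k => pow_pos hρinv k)
      hsub ⟨ρ / 2, by positivity, htend⟩ 1 one_pos
    refine ⟨C, fun x hx k => ?_⟩
    have h1 := hC x hx k
    simp only [one_pow, mul_one] at h1
    have h2 := mul_le_mul_of_nonneg_right h1 (le_of_lt (pow_pos hρ k))
    have h3 : ‖iteratedFDerivWithin ℝ k f U x‖ * (1 / ρ) ^ k * ρ ^ k
        = ‖iteratedFDerivWithin ℝ k f U x‖ := by
      rw [mul_assoc, ← mul_pow]
      field_simp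
      simp
    rw [h3] at h2
    calc ‖iteratedFDerivWithin ℝ k f U x‖ ≤ C * (Nat.factorial k) * M k * ρ ^ k := h2
      _ = C * ρ ^ k * (Nat.factorial k) * M k := by ring
end

section
/- Let E be a Banach space, U ⊆ E open, f ∈ C^∞(U, ℝ), and M = (M_k) a positive sequence. Then f is of Roumieu class C^{{M}} (i.e., for every compact K ⊆ U there exists ρ > 0 such that {‖f^{(k)}(x)‖/(ρ^k k! M_k) : x ∈ K, k ∈ ℕ} is bounded) if and only if for every compact K ⊆ U and every sequence (r_k) of positive reals with r_k r_ℓ ≥ r_{k+ℓ} and r_k ρ^k → 0 for all ρ > 0, there exists δ > 0 such that {‖f^{(k)}(x)‖ r_k δ^k/(k! M_k) : x ∈ K, k ∈ ℕ} is bounded. -/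
open Filter

/-- If `c k / ρ^k` is unbounded for every `ρ`, we can find terms beyond any `N`. -/
lemma exists_gt_of_forall_unbounded (c : ℕ → ℝ)
    (H : ∀ ρ : ℝ, 0 < ρ → ∀ A : ℝ, ∃ k, A * ρ ^ k < c k)
    (ρ : ℝ) (hρ : 0 < ρ) (A : ℝ) (N : ℕ) : ∃ k, N < k ∧ A * ρ ^ k < c k := by
  set B : ℝ := ((Finset.range (N + 1)).sup' (by simp) (fun k => c k / ρ ^ k)) ⊔ A with hB
  obtain ⟨k, hk⟩ := H ρ hρ B
  refine ⟨k, ?_, ?_⟩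
  · by_contra hkN
    push_neg at hkN
    have h1 : c k / ρ ^ k ≤ B :=
      le_trans (Finset.le_sup' (fun k => c k / ρ ^ k)
        (Finset.mem_range.2 (Nat.lt_succ_of_le hkN))) le_sup_left
    have h2 : c k ≤ B * ρ ^ k := (div_le_iff₀ (pow_pos hρ k)).1 h1
    linarith
  · calc A * ρ ^ k ≤ B * ρ ^ k := by
          apply mul_le_mul_of_nonneg_right le_sup_right (pow_pos hρ k).le
      _ < c k := hk

/-- Key sequence lemma: if `(c k * r k * δ^k)` is bounded for some `δ > 0` for every
positive submultiplicative test sequence `r` with `r k * ρ^k → 0`, then `c k ≤ C ρ^k`. -/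
lemma roumieu_seq_lemma (c : ℕ → ℝ) (hc : ∀ k, 0 ≤ c k)
    (h : ∀ r : ℕ → ℝ, (∀ k, 0 < r k) → (∀ k l : ℕ, r (k + l) ≤ r k * r l) →
      (∀ ρ > (0 : ℝ), Tendsto (fun k : ℕ => r k * ρ ^ k) atTop (nhds 0)) →
      ∃ δ > (0 : ℝ), ∃ C : ℝ, ∀ k, c k * r k * δ ^ k ≤ C) :
    ∃ ρ > (0 : ℝ), ∃ C : ℝ, ∀ k, c k ≤ C * ρ ^ k := by
  by_contra hcon
  push_neg at hcon
  have H : ∀ ρ : ℝ, 0 < ρ → ∀ A : ℝ, ∃ k, A * ρ ^ k < c k := by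
    intro ρ hρ A
    obtain ⟨k, hk⟩ := hcon ρ hρ A
    exact ⟨k, hk⟩
  -- existence of the next index in the construction
  have hstep : ∀ (j k : ℕ) (v : ℝ), ∃ k' : ℕ, k < k' ∧
      ((j : ℝ) + 1) * Real.exp (v + ((j : ℝ) + 1) * ((k' : ℝ) - (k : ℝ))
        + ((j : ℝ) + 1) * (k' : ℝ)) < c k' := by
    intro j k v
    obtain ⟨k', hk'1, hk'2⟩ := exists_gt_of_forall_unbounded c H
      (Real.exp (2 * ((j : ℝ) + 1))) (Real.exp_pos _)
      (((j : ℝ) + 1) * Real.exp (v - ((j : ℝ) + 1) * (k : ℝ))) k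
    refine ⟨k', hk'1, ?_⟩
    have : (((j : ℝ) + 1) * Real.exp (v - ((j : ℝ) + 1) * (k : ℝ))) *
        (Real.exp (2 * ((j : ℝ) + 1))) ^ k'
      = ((j : ℝ) + 1) * Real.exp (v + ((j : ℝ) + 1) * ((k' : ℝ) - (k : ℝ))
        + ((j : ℝ) + 1) * (k' : ℝ)) := by
      rw [← Real.exp_nat_mul, mul_assoc, ← Real.exp_add]
      ring_nf
    rw [← this]
    exact hk'2
  choose F hF1 hF2 using hstep
  -- the recursive construction of indices and values
  set st : ℕ → ℕ × ℝ := fun n => Nat.rec ((0 : ℕ), (0 : ℝ))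
    (fun j p => (F j p.1 p.2, p.2 + ((j : ℝ) + 1) * ((F j p.1 p.2 : ℝ) - (p.1 : ℝ)))) n
    with hst
  set Kk : ℕ → ℕ := fun j => (st j).1 with hKk
  set V : ℕ → ℝ := fun j => (st j).2 with hV
  have hK0 : Kk 0 = 0 := rfl
  have hV0 : V 0 = 0 := rfl
  have hKsucc : ∀ j, Kk (j + 1) = F j (Kk j) (V j) := fun j => rfl
  have hVsucc : ∀ j, V (j + 1) = V j + ((j : ℝ) + 1) * ((Kk (j + 1) : ℝ) - (Kk j : ℝ)) := by
    intro j; rfl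
  have hKlt : ∀ j, Kk j < Kk (j + 1) := by
    intro j; rw [hKsucc]; exact hF1 j (Kk j) (V j)
  have hKmono : StrictMono Kk := strictMono_nat_of_lt_succ hKlt
  have hjK : ∀ j, j ≤ Kk j := fun j => hKmono.le_apply
  -- the index function: largest j with Kk j ≤ i
  classical
  set jdx : ℕ → ℕ := fun i => Nat.findGreatest (fun j => Kk j ≤ i) i with hjdx
  have hjdx_spec : ∀ i, Kk (jdx i) ≤ i := by
    intro i
    have h0 : Kk 0 ≤ i := (le_of_eq hK0).trans (Nat.zero_le i)
    exact Nat.findGreatest_spec (P := fun j => Kk j ≤ i) (Nat.zero_le i) h0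
  have hjdx_mono : Monotone jdx := by
    intro a b hab
    exact Nat.le_findGreatest (le_trans (le_trans (hjK _) (hjdx_spec a)) hab)
      (le_trans (hjdx_spec a) hab)
  have hjdx_lt : ∀ i, i < Kk (jdx i + 1) := by
    intro i
    by_contra hcon2
    push_neg at hcon2
    have : jdx i + 1 ≤ jdx i :=
      Nat.le_findGreatest (le_trans (hjK (jdx i + 1)) hcon2) hcon2
    omega
  have hjdx_block : ∀ j i, Kk j ≤ i → i < Kk (j + 1) → jdx i = j := by
    intro j i h1 h2
    have hle : jdx i ≤ j := by
      by_contra hcon2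
      push_neg at hcon2
      have : Kk (j + 1) ≤ Kk (jdx i) := hKmono.monotone hcon2
      have := hjdx_spec i
      omega
    have hge : j ≤ jdx i := Nat.le_findGreatest (le_trans (hjK j) h1) h1
    omega
  set s : ℕ → ℕ := fun i => jdx i + 1 with hs
  have hs_mono : Monotone s := fun a b hab => by
    simp only [hs]; exact Nat.succ_le_succ (hjdx_mono hab)
  set φ : ℕ → ℝ := fun k => ∑ i ∈ Finset.range k, ((s i : ℝ)) with hφ
  have hφ_nonneg : ∀ k, 0 ≤ φ k := fun k => Finset.sum_nonneg fun i _ => by positivity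
  have hφ_superadd : ∀ k l, φ k + φ l ≤ φ (k + l) := by
    intro k l
    rw [hφ]
    simp only
    rw [Finset.sum_range_add]
    gcongr with i hi
    exact_mod_cast hs_mono (Nat.le_add_left i k)
  have hφ_Ico : ∀ {a b : ℕ}, a ≤ b → φ b = φ a + ∑ i ∈ Finset.Ico a b, ((s i : ℝ)) := by
    intro a b hab
    simp only [hφ, Finset.range_eq_Ico]
    exact (Finset.sum_Ico_consecutive _ (Nat.zero_le a) hab).symm
  have hφK : ∀ j, φ (Kk j) = V j := by
    intro j
    induction j with
    | zero => simp [hK0, hV0, hφ]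
    | succ j ih =>
      rw [hφ_Ico (hKlt j).le, ih, hVsucc]
      congr 1
      have hconst : ∀ i ∈ Finset.Ico (Kk j) (Kk (j + 1)), ((s i : ℝ)) = ((j : ℝ) + 1) := by
        intro i hi
        rw [Finset.mem_Ico] at hi
        have := hjdx_block j i hi.1 hi.2
        simp [hs, this]
      rw [Finset.sum_congr rfl hconst, Finset.sum_const, Nat.card_Ico, nsmul_eq_mul,
        Nat.cast_sub (hKlt j).le]
      ring
  have hgrow : ∀ L : ℝ, Tendsto (fun k : ℕ => φ k - (k : ℝ) * L) atTop atTop := by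
    intro L
    obtain ⟨m, hm⟩ := exists_nat_ge (L + 1)
    set N := Kk m with hN
    have hbound : ∀ k, N ≤ k → (k : ℝ) - (N : ℝ) * (m : ℝ) ≤ φ k - (k : ℝ) * L := by
      intro k hk
      have hsum : ((k - N : ℕ) : ℝ) * (m : ℝ) ≤ ∑ i ∈ Finset.Ico N k, ((s i : ℝ)) := by
        rw [← Nat.card_Ico N k, ← nsmul_eq_mul, ← Finset.sum_const]
        apply Finset.sum_le_sum
        intro i hi
        rw [Finset.mem_Ico] at hi
        have hji : m ≤ jdx i := Nat.le_findGreatest (le_trans (hjK m) hi.1) hi.1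
        have : m ≤ s i := by simp only [hs]; omega
        exact_mod_cast this
      have hφk := hφ_Ico hk
      have hφN := hφ_nonneg N
      rw [Nat.cast_sub hk] at hsum
      have hkN : (N : ℝ) ≤ (k : ℝ) := by exact_mod_cast hk
      nlinarith [mul_le_mul_of_nonneg_left hm (sub_nonneg.2 hkN)]
    have htend : Tendsto (fun k : ℕ => (k : ℝ) - (N : ℝ) * (m : ℝ)) atTop atTop :=
      tendsto_atTop_add_const_right atTop _ tendsto_natCast_atTop_atTop
    exact tendsto_atTop_mono' atTop (eventually_atTop.2 ⟨N, hbound⟩) (by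
      simpa [sub_eq_add_neg] using htend)
  set r : ℕ → ℝ := fun k => Real.exp (-(φ k)) with hr
  have hr_pos : ∀ k, 0 < r k := fun k => Real.exp_pos _
  have hr_submul : ∀ k l : ℕ, r (k + l) ≤ r k * r l := by
    intro k l
    rw [hr]
    simp only [← Real.exp_add]
    exact Real.exp_le_exp.2 (by linarith [hφ_superadd k l])
  have hr_tend : ∀ ρ > (0 : ℝ), Tendsto (fun k : ℕ => r k * ρ ^ k) atTop (nhds 0) := by
    intro ρ hρ
    have heq : ∀ k : ℕ, r k * ρ ^ k = Real.exp (-(φ k - (k : ℝ) * Real.log ρ)) := by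
      intro k
      have harg : -(φ k - (k : ℝ) * Real.log ρ) = -(φ k) + (k : ℝ) * Real.log ρ := by ring
      rw [harg, Real.exp_add, Real.exp_nat_mul, Real.exp_log hρ]
    simp only [heq]
    exact Real.tendsto_exp_atBot.comp (tendsto_neg_atBot_iff.2 (hgrow (Real.log ρ)))
  obtain ⟨δ, hδ, C, hC⟩ := h r hr_pos hr_submul hr_tend
  -- choose j large
  obtain ⟨n₁, hn₁⟩ := exists_nat_ge C
  obtain ⟨n₂, hn₂⟩ := exists_nat_ge (-Real.log δ)
  set j := max n₁ n₂ with hj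
  have hCj : C < (j : ℝ) + 1 := by
    have : (n₁ : ℝ) ≤ (j : ℝ) := by exact_mod_cast le_max_left n₁ n₂
    linarith
  have hδj : 1 ≤ Real.exp ((j : ℝ) + 1) * δ := by
    have h1 : -Real.log δ ≤ (j : ℝ) + 1 := by
      have : (n₂ : ℝ) ≤ (j : ℝ) := by exact_mod_cast le_max_right n₁ n₂
      linarith
    have h2 : Real.exp (-Real.log δ) ≤ Real.exp ((j : ℝ) + 1) := Real.exp_le_exp.2 h1
    rw [Real.exp_neg, Real.exp_log hδ] at h2
    calc (1 : ℝ) = δ⁻¹ * δ := (inv_mul_cancel₀ hδ.ne').symm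
      _ ≤ Real.exp ((j : ℝ) + 1) * δ := mul_le_mul_of_nonneg_right h2 hδ.le
  set k' := Kk (j + 1) with hk'
  have hc_big : ((j : ℝ) + 1) * Real.exp (φ k' + ((j : ℝ) + 1) * (k' : ℝ)) < c k' := by
    have h2 := hF2 j (Kk j) (V j)
    rw [← hKsucc, ← hk'] at h2
    have harg : V j + ((j : ℝ) + 1) * ((k' : ℝ) - (Kk j : ℝ)) + ((j : ℝ) + 1) * (k' : ℝ)
        = φ k' + ((j : ℝ) + 1) * (k' : ℝ) := by
      rw [hk', hφK (j + 1), hVsucc]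
    rw [harg] at h2
    exact h2
  have hlt : ((j : ℝ) + 1) ≤ c k' * r k' * δ ^ k' := by
    have hpos : 0 < r k' * δ ^ k' := mul_pos (hr_pos k') (pow_pos hδ k')
    have step1 : (((j : ℝ) + 1) * Real.exp (φ k' + ((j : ℝ) + 1) * (k' : ℝ)))
        * (r k' * δ ^ k') ≤ c k' * (r k' * δ ^ k') :=
      mul_le_mul_of_nonneg_right hc_big.le hpos.le
    have step2 : (((j : ℝ) + 1) * Real.exp (φ k' + ((j : ℝ) + 1) * (k' : ℝ)))
        * (r k' * δ ^ k') = ((j : ℝ) + 1) * (Real.exp ((j : ℝ) + 1) * δ) ^ k' := by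
      have hrk : r k' = Real.exp (-(φ k')) := rfl
      have key : Real.exp (φ k' + ((j : ℝ) + 1) * (k' : ℝ)) * Real.exp (-(φ k'))
          = Real.exp ((j : ℝ) + 1) ^ k' := by
        rw [← Real.exp_add, ← Real.exp_nat_mul]
        congr 1
        ring
      calc (((j : ℝ) + 1) * Real.exp (φ k' + ((j : ℝ) + 1) * (k' : ℝ))) * (r k' * δ ^ k')
          = ((j : ℝ) + 1) * ((Real.exp (φ k' + ((j : ℝ) + 1) * (k' : ℝ))
              * Real.exp (-(φ k'))) * δ ^ k') := by rw [hrk]; ring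
        _ = ((j : ℝ) + 1) * (Real.exp ((j : ℝ) + 1) ^ k' * δ ^ k') := by rw [key]
        _ = ((j : ℝ) + 1) * (Real.exp ((j : ℝ) + 1) * δ) ^ k' := by rw [mul_pow]
    have step3 : ((j : ℝ) + 1) ≤ ((j : ℝ) + 1) * (Real.exp ((j : ℝ) + 1) * δ) ^ k' := by
      nth_rewrite 1 [← mul_one ((j : ℝ) + 1)]
      exact mul_le_mul_of_nonneg_left (one_le_pow₀ hδj) (by positivity)
    calc ((j : ℝ) + 1) ≤ ((j : ℝ) + 1) * (Real.exp ((j : ℝ) + 1) * δ) ^ k' := step3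
      _ = _ := step2.symm
      _ ≤ c k' * (r k' * δ ^ k') := step1
      _ = c k' * r k' * δ ^ k' := by ring
  have := hC k'
  linarith

/-- Roumieu class membership via submultiplicative test sequences (Lemma 4.8):
a smooth function on an open subset of a Banach space is of class `C^{{M}}` iff
for every compact `K` and every positive submultiplicative sequence `(r_k)` with
`r_k ρ^k → 0` for all `ρ > 0`, there exists `δ > 0` such that the set
`{‖f^{(k)}(x)‖ r_k δ^k / (k! M_k)}` is bounded. -/
theorem roumieu_iff_test_sequences
    {E : Type*} [NormedAddCommGroup E] [NormedSpace ℝ E] [CompleteSpace E]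
    (U : Set E) (hU : IsOpen U) (f : E → ℝ) (hf : ContDiffOn ℝ (⊤ : ℕ∞) f U)
    (M : ℕ → ℝ) (hM : ∀ k, 0 < M k) :
    (∀ K : Set E, IsCompact K → K ⊆ U → ∃ ρ > (0 : ℝ), ∃ C : ℝ, ∀ x ∈ K, ∀ k : ℕ,
        ‖iteratedFDerivWithin ℝ k f U x‖ ≤ C * ρ ^ k * (Nat.factorial k) * M k)
    ↔
    (∀ K : Set E, IsCompact K → K ⊆ U →
      ∀ r : ℕ → ℝ, (∀ k, 0 < r k) → (∀ k l : ℕ, r (k + l) ≤ r k * r l) →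
      (∀ ρ > (0 : ℝ), Tendsto (fun k : ℕ => r k * ρ ^ k) atTop (nhds 0)) →
      ∃ δ > (0 : ℝ), ∃ C : ℝ, ∀ x ∈ K, ∀ k : ℕ,
        ‖iteratedFDerivWithin ℝ k f U x‖ * r k * δ ^ k
          ≤ C * (Nat.factorial k) * M k) := by
  constructor
  · -- forward: easy direction
    intro hyp K hK hKU r hrpos hrsub hrtend
    obtain ⟨ρ, hρ, C, hC⟩ := hyp K hK hKU
    -- r is bounded
    have hb : BddAbove (Set.range r) := by
      have := hrtend 1 one_pos
      simp only [one_pow, mul_one] at this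
      exact this.bddAbove_range
    obtain ⟨B, hB⟩ := hb
    have hBpos : 0 < B := lt_of_lt_of_le (hrpos 0) (hB ⟨0, rfl⟩)
    refine ⟨ρ⁻¹, inv_pos.2 hρ, (max C 0) * B, ?_⟩
    intro x hx k
    have hfact : (0 : ℝ) < (Nat.factorial k : ℝ) := by exact_mod_cast Nat.factorial_pos k
    have hrk := hrpos k
    have hrB : r k ≤ B := hB ⟨k, rfl⟩
    calc ‖iteratedFDerivWithin ℝ k f U x‖ * r k * (ρ⁻¹) ^ k
        = ‖iteratedFDerivWithin ℝ k f U x‖ * (r k * (ρ⁻¹) ^ k) := by ring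
      _ ≤ (C * ρ ^ k * (Nat.factorial k) * M k) * (r k * (ρ⁻¹) ^ k) :=
          mul_le_mul_of_nonneg_right (hC x hx k)
            (mul_nonneg (hrpos k).le (by positivity))
      _ = (C * (Nat.factorial k) * M k * r k) * (ρ ^ k * (ρ⁻¹) ^ k) := by ring
      _ = C * (Nat.factorial k) * M k * r k := by
          rw [← mul_pow, mul_inv_cancel₀ hρ.ne', one_pow, mul_one]
      _ ≤ (max C 0) * B * (Nat.factorial k) * M k := by
          have h1 : C * ((Nat.factorial k : ℝ) * M k * r k)
              ≤ (max C 0) * ((Nat.factorial k : ℝ) * M k * r k) :=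
            mul_le_mul_of_nonneg_right (le_max_left C 0)
              (mul_nonneg (mul_nonneg hfact.le (hM k).le) hrk.le)
          have h2 : (max C 0) * ((Nat.factorial k : ℝ) * M k * r k)
              ≤ (max C 0) * ((Nat.factorial k : ℝ) * M k * B) :=
            mul_le_mul_of_nonneg_left
              (mul_le_mul_of_nonneg_left hrB (mul_pos hfact (hM k)).le)
              (le_max_right C 0)
          nlinarith [h1, h2]
  · -- backward: hard direction
    intro hyp K hK hKU
    rcases K.eq_empty_or_nonempty with hKe | ⟨x₀, hx₀⟩
    · exact ⟨1, one_pos, 0, by simp [hKe]⟩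
    -- the function G and its sup
    set G : ℕ → E → ℝ := fun k x =>
      ‖iteratedFDerivWithin ℝ k f U x‖ / ((Nat.factorial k : ℝ) * M k) with hG
    have hGcont : ∀ k, ContinuousOn (G k) K := by
      intro k
      apply ContinuousOn.div_const
      apply ContinuousOn.norm
      exact (hf.continuousOn_iteratedFDerivWithin (by exact_mod_cast le_top) hU.uniqueDiffOn).mono hKU
    have hbdd : ∀ k, BddAbove (G k '' K) := fun k => hK.bddAbove_image (hGcont k)
    have hne : ∀ k, (G k '' K).Nonempty := fun k => ⟨G k x₀, ⟨x₀, hx₀, rfl⟩⟩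
    set c : ℕ → ℝ := fun k => sSup (G k '' K) with hc
    have hfactM : ∀ k : ℕ, (0 : ℝ) < (Nat.factorial k : ℝ) * M k := by
      intro k
      have : (0 : ℝ) < (Nat.factorial k : ℝ) := by exact_mod_cast Nat.factorial_pos k
      exact mul_pos this (hM k)
    have hc_nonneg : ∀ k, 0 ≤ c k := by
      intro k
      have hGx : 0 ≤ G k x₀ := div_nonneg (norm_nonneg _) (hfactM k).le
      exact le_trans hGx (le_csSup (hbdd k) ⟨x₀, hx₀, rfl⟩)
    have happ : ∀ r : ℕ → ℝ, (∀ k, 0 < r k) → (∀ k l : ℕ, r (k + l) ≤ r k * r l) →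
        (∀ ρ > (0 : ℝ), Tendsto (fun k : ℕ => r k * ρ ^ k) atTop (nhds 0)) →
        ∃ δ > (0 : ℝ), ∃ C : ℝ, ∀ k, c k * r k * δ ^ k ≤ C := by
      intro r hrpos hrsub hrtend
      obtain ⟨δ, hδ, C, hC⟩ := hyp K hK hKU r hrpos hrsub hrtend
      refine ⟨δ, hδ, C, ?_⟩
      intro k
      have hpos : (0 : ℝ) < r k * δ ^ k := mul_pos (hrpos k) (pow_pos hδ k)
      rw [mul_assoc, ← le_div_iff₀ hpos]
      apply csSup_le (hne k)
      rintro b ⟨x, hx, rfl⟩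
      rw [hG]
      simp only
      rw [div_le_div_iff₀ (hfactM k) hpos]
      calc ‖iteratedFDerivWithin ℝ k f U x‖ * (r k * δ ^ k)
          = ‖iteratedFDerivWithin ℝ k f U x‖ * r k * δ ^ k := by ring
        _ ≤ C * (Nat.factorial k) * M k := hC x hx k
        _ = C * ((Nat.factorial k : ℝ) * M k) := by ring
    obtain ⟨ρ, hρ, C, hCfin⟩ := roumieu_seq_lemma c hc_nonneg happ
    refine ⟨ρ, hρ, C, ?_⟩
    intro x hx k
    have h1 : G k x ≤ c k := le_csSup (hbdd k) ⟨x, hx, rfl⟩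
    have h2 : ‖iteratedFDerivWithin ℝ k f U x‖ = G k x * ((Nat.factorial k : ℝ) * M k) := by
      rw [hG]
      simp only
      rw [div_mul_cancel₀ _ (hfactM k).ne']
    calc ‖iteratedFDerivWithin ℝ k f U x‖ = G k x * ((Nat.factorial k : ℝ) * M k) := h2
      _ ≤ c k * ((Nat.factorial k : ℝ) * M k) :=
          mul_le_mul_of_nonneg_right h1 (hfactM k).le
      _ ≤ (C * ρ ^ k) * ((Nat.factorial k : ℝ) * M k) :=
          mul_le_mul_of_nonneg_right (hCfin k) (hfactM k).le
      _ = C * ρ ^ k * (Nat.factorial k) * M k := by ring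
end
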